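/- arXiv:1301.4314 — 17 statements merged into one kernel-verified Lean document; each statement's English description precedes it below -/
import Mathlib

section
/- Let A be a complex unital Banach algebra, let a, δa ∈ A, let p, q ∈ A be idempotents, and suppose b ∈ A satisfies b·a·b = b, R_r(b) = R_r(p) and K_r(b) = R_r(q) (i.e., b = a^{(2,l)}_{p,q}). Put ā = a + δa. If 1 + δa·b is invertible in A, then the element w = b·(1 + δa·b)⁻¹ satisfies w·ā·w = w, R_r(w) = R_r(p) and K_r(w) = R_r(q); that is, ā^{(2,l)}_{p,q} exists and equals w. Moreover w = (1 + b·δa)⁻¹·b. -/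
/-- Right range `R_r(a) = {a·x : x ∈ A}`. -/
def Rr {A : Type*} [Ring A] (a : A) : Set A := {y | ∃ x, y = a * x}

/-- Right kernel `K_r(a) = {x ∈ A : a·x = 0}`. -/
def Kr {A : Type*} [Ring A] (a : A) : Set A := {x | a * x = 0}

theorem stmt0 {A : Type*} [NormedRing A] [NormedAlgebra ℂ A] [CompleteSpace A]
    (a δa p q b : A) (hp : p * p = p) (hq : q * q = q)
    (hb1 : b * a * b = b) (hb2 : Rr b = Rr p) (hb3 : Kr b = Rr q)
    (hu : IsUnit (1 + δa * b)) :
    b * Ring.inverse (1 + δa * b) * (a + δa) * (b * Ring.inverse (1 + δa * b))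
        = b * Ring.inverse (1 + δa * b) ∧
      Rr (b * Ring.inverse (1 + δa * b)) = Rr p ∧
      Kr (b * Ring.inverse (1 + δa * b)) = Rr q ∧
      b * Ring.inverse (1 + δa * b) = Ring.inverse (1 + b * δa) * b := by
  obtain ⟨u, huu⟩ := hu
  have hinv : Ring.inverse (1 + δa * b) = (↑u⁻¹ : A) := by
    rw [← huu, Ring.inverse_unit]
  set c : A := (↑u⁻¹ : A) with hc
  have h1 : (1 + δa * b) * c = 1 := by rw [← huu]; exact u.mul_inv
  have h2 : c * (1 + δa * b) = 1 := by rw [← huu]; exact u.inv_mul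
  set v : A := 1 + b * δa with hv
  set vinv : A := 1 - b * c * δa with hvinv
  have hvv : vinv * v = 1 := by
    have : b * c * δa * (b * δa) = b * (δa * b) * c * δa := by
      have := h2
      have hcomm : (δa * b) * c = c * (δa * b) := by
        have e1 : (δa * b) * c = ((1 + δa * b) - 1) * c := by noncomm_ring
        have e2 : c * (δa * b) = c * ((1 + δa * b) - 1) := by noncomm_ring
        rw [e1, e2, sub_mul, mul_sub, h1, h2]; simp
      calc b * c * δa * (b * δa) = b * (c * (δa * b)) * δa := by noncomm_ring
        _ = b * ((δa * b) * c) * δa := by rw [hcomm]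
        _ = b * (δa * b) * c * δa := by noncomm_ring
    calc vinv * v = 1 + b * δa - b * c * δa - b * c * δa * (b * δa) := by
          rw [hvinv, hv]; noncomm_ring
      _ = 1 + b * δa - b * c * δa - b * (δa * b) * c * δa := by rw [this]
      _ = 1 + b * δa - b * ((1 + δa * b) * c) * δa := by noncomm_ring
      _ = 1 := by rw [h1]; noncomm_ring
  have hvv2 : v * vinv = 1 := by
    have hcomm : (δa * b) * c = c * (δa * b) := by
      have e1 : (δa * b) * c = ((1 + δa * b) - 1) * c := by noncomm_ring
      have e2 : c * (δa * b) = c * ((1 + δa * b) - 1) := by noncomm_ring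
      rw [e1, e2, sub_mul, mul_sub, h1, h2]; simp
    calc v * vinv = 1 + b * δa - b * c * δa - b * ((δa * b) * c) * δa := by
          rw [hvinv, hv]; noncomm_ring
      _ = 1 + b * δa - b * c * δa - b * (c * (δa * b)) * δa := by rw [hcomm]
      _ = 1 + b * δa - b * (c * (1 + δa * b)) * δa := by noncomm_ring
      _ = 1 := by rw [h2]; noncomm_ring
  have hbc : b * c = vinv * b := by
    have : b * c * (δa * b) = b * ((1 + δa * b) * c) - b * c := by
      have hcomm : (δa * b) * c = c * (δa * b) := by
        have e1 : (δa * b) * c = ((1 + δa * b) - 1) * c := by noncomm_ring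
        have e2 : c * (δa * b) = c * ((1 + δa * b) - 1) := by noncomm_ring
        rw [e1, e2, sub_mul, mul_sub, h1, h2]; simp
      calc b * c * (δa * b) = b * ((δa * b) * c) := by rw [hcomm]; noncomm_ring
        _ = b * ((1 + δa * b) * c) - b * c := by noncomm_ring
    calc b * c = b - (b * ((1 + δa * b) * c) - b * c) := by rw [h1]; noncomm_ring
      _ = b - b * c * (δa * b) := by rw [this]
      _ = vinv * b := by rw [hvinv]; noncomm_ring
  have key : b * (a + δa) * b = v * b := by
    have : b * (a + δa) * b = b * a * b + b * δa * b := by noncomm_ring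
    rw [this, hb1, hv]; noncomm_ring
  rw [hinv]
  refine ⟨?_, ?_, ?_, ?_⟩
  · calc b * c * (a + δa) * (b * c) = (b * c) * ((a + δa) * b) * c := by noncomm_ring
      _ = (vinv * b) * ((a + δa) * b) * c := by rw [hbc]
      _ = vinv * (b * (a + δa) * b) * c := by noncomm_ring
      _ = vinv * (v * b) * c := by rw [key]
      _ = (vinv * v) * (b * c) := by noncomm_ring
      _ = b * c := by rw [hvv, one_mul]
  · rw [← hb2]
    ext y
    constructor
    · rintro ⟨x, rfl⟩; exact ⟨c * x, by noncomm_ring⟩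
    · rintro ⟨x, rfl⟩
      exact ⟨(1 + δa * b) * x, by rw [show b * c * ((1 + δa * b) * x) = b * (c * (1 + δa * b)) * x by noncomm_ring, h2, mul_one]⟩
  · rw [← hb3]
    ext x
    simp only [Kr, Set.mem_setOf_eq]
    constructor
    · intro h
      have : v * (b * c * x) = 0 := by rw [h, mul_zero]
      calc b * x = (v * vinv) * b * x := by rw [hvv2, one_mul]
        _ = v * (vinv * b * x) := by noncomm_ring
        _ = v * (b * c * x) := by rw [hbc]
        _ = 0 := this
    · intro h
      calc b * c * x = vinv * (b * x) := by rw [hbc]; noncomm_ring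
        _ = 0 := by rw [h, mul_zero]
  · have hV : Ring.inverse v = vinv := by
      have := Ring.inverse_unit (⟨v, vinv, hvv2, hvv⟩ : Aˣ)
      simpa using this
    rw [hv] at hV
    rw [hV, ← hbc]
end

section
/- Let A be a complex unital Banach algebra, a ∈ A and p, q ∈ A idempotents. The following are equivalent: (1) there exists b ∈ A with b·a·b = b, R_r(b) = R_r(p) and K_r(b) = R_r(q) (i.e., a^{(2,l)}_{p,q} exists); (2) there exists c ∈ A with c·a·c = c, R_l(c) = R_l(1−q) and K_l(c) = R_l(1−p); (3) K_l(a) ∩ R_l(1−q) = {0}, the set {x·(1−q)·a : x ∈ A} together with R_l(1−p) spans A (every element of A is a sum of one element from each), and {x·(1−q)·a : x ∈ A} ∩ R_l(1−p) = {0}. -/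
/-- Left range `R_l(a) = {x·a : x ∈ A}`. -/
def Rl {A : Type*} [Ring A] (a : A) : Set A := {y | ∃ x, y = x * a}

/-- Left kernel `K_l(a) = {x ∈ A : x·a = 0}`. -/
def Kl {A : Type*} [Ring A] (a : A) : Set A := {x | x * a = 0}

section Helpers

variable {A : Type*} [Ring A]

/-- Facts derived from condition (1). -/
lemma cond1_facts (a p q b : A) (hp : p * p = p) (hq : q * q = q)
    (hb : b * a * b = b) (hR : Rr b = Rr p) (hK : Kr b = Rr q) :
    p * b = b ∧ b * q = 0 ∧ (1 - q) * (a * b) = 1 - q ∧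
      (1 - b * a) * (1 - p) = 1 - b * a := by
  obtain ⟨t, ht⟩ : b ∈ Rr p := by rw [← hR]; exact ⟨1, (mul_one b).symm⟩
  obtain ⟨s, hs⟩ : p ∈ Rr b := by rw [hR]; exact ⟨p, hp.symm⟩
  have hpb : p * b = b := by rw [ht, ← mul_assoc, hp]
  have hbq : b * q = 0 := by
    have : q ∈ Kr b := by rw [hK]; exact ⟨q, hq.symm⟩
    exact this
  obtain ⟨m, hm⟩ : (1 : A) - a * b ∈ Rr q := by
    rw [← hK]
    show b * (1 - a * b) = 0
    calc b * (1 - a * b) = b - b * a * b := by noncomm_ring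
      _ = 0 := by rw [hb, sub_self]
  have hqm : q * (1 - a * b) = 1 - a * b := by
    rw [hm, ← mul_assoc, hq]
  have k1 : (1 - q) * (a * b) = 1 - q := by
    have h' : q * (a * b) = q - 1 + a * b := by
      have := hqm
      rw [mul_sub, mul_one] at this
      have h2 : q * (a * b) = q - (1 - a * b) := by rw [← this]; abel
      rw [h2]; abel
    rw [sub_mul, one_mul, h']; abel
  have k2 : (1 - b * a) * (1 - p) = 1 - b * a := by
    have hpz : (1 - b * a) * p = 0 := by
      calc (1 - b * a) * p = b * s - b * a * b * s := by rw [hs]; noncomm_ring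
        _ = b * s - b * s := by rw [hb]
        _ = 0 := sub_self _
    rw [mul_sub, mul_one, hpz, sub_zero]
  exact ⟨hpb, hbq, k1, k2⟩

lemma one_to_two (a p q : A) (hp : p * p = p) (hq : q * q = q)
    (h : ∃ b : A, b * a * b = b ∧ Rr b = Rr p ∧ Kr b = Rr q) :
    ∃ c : A, c * a * c = c ∧ Rl c = Rl (1 - q) ∧ Kl c = Rl (1 - p) := by
  obtain ⟨b, hb, hR, hK⟩ := h
  obtain ⟨hpb, hbq, k1, k2⟩ := cond1_facts a p q b hp hq hb hR hK
  have hb1q : b * (1 - q) = b := by rw [mul_sub, mul_one, hbq, sub_zero]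
  refine ⟨b, hb, ?_, ?_⟩
  · ext x
    constructor
    · rintro ⟨y, rfl⟩
      refine ⟨y * b, ?_⟩
      calc y * b = y * (b * (1 - q)) := by rw [hb1q]
        _ = y * b * (1 - q) := by noncomm_ring
    · rintro ⟨y, rfl⟩
      refine ⟨y * ((1 - q) * a), ?_⟩
      calc y * (1 - q) = y * ((1 - q) * (a * b)) := by rw [k1]
        _ = y * ((1 - q) * a) * b := by noncomm_ring
  · ext x
    constructor
    · intro hx
      have hx' : x * b = 0 := hx
      refine ⟨x * (1 - b * a), ?_⟩
      have h1 : x * (1 - b * a) = x := by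
        rw [mul_sub, mul_one, ← mul_assoc, hx', zero_mul, sub_zero]
      rw [mul_assoc, k2, h1]
    · rintro ⟨y, rfl⟩
      show y * (1 - p) * b = 0
      calc y * (1 - p) * b = y * (b - p * b) := by noncomm_ring
        _ = 0 := by rw [hpb, sub_self, mul_zero]

lemma two_to_one (a p q : A) (hp : p * p = p) (hq : q * q = q)
    (h : ∃ c : A, c * a * c = c ∧ Rl c = Rl (1 - q) ∧ Kl c = Rl (1 - p)) :
    ∃ b : A, b * a * b = b ∧ Rr b = Rr p ∧ Kr b = Rr q := by
  obtain ⟨c, hc, hR, hK⟩ := h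
  obtain ⟨u, hu⟩ : c ∈ Rl (1 - q) := by rw [← hR]; exact ⟨1, (one_mul c).symm⟩
  obtain ⟨n, hn⟩ : (1 : A) - q ∈ Rl c := by rw [hR]; exact ⟨1, (one_mul _).symm⟩
  have hcq : c * q = 0 := by
    calc c * q = u * (q - q * q) := by rw [hu]; noncomm_ring
      _ = 0 := by rw [hq, sub_self, mul_zero]
  have h1pc : (1 - p) * c = 0 := by
    have : (1 : A) - p ∈ Kl c := by rw [hK]; exact ⟨1, (one_mul _).symm⟩
    exact this
  have hpc : p * c = c := by
    have h' : c - p * c = 0 := by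
      calc c - p * c = (1 - p) * c := by noncomm_ring
        _ = 0 := h1pc
    exact (sub_eq_zero.mp h').symm
  obtain ⟨k, hk⟩ : (1 : A) - c * a ∈ Rl (1 - p) := by
    rw [← hK]
    show (1 - c * a) * c = 0
    calc (1 - c * a) * c = c - c * a * c := by noncomm_ring
      _ = 0 := by rw [hc, sub_self]
  have k1 : (1 - q) * (a * c) = 1 - q := by
    calc (1 - q) * (a * c) = (n * c) * (a * c) := by rw [← hn]
      _ = n * (c * a * c) := by noncomm_ring
      _ = n * c := by rw [hc]
      _ = 1 - q := hn.symm
  have k2 : (1 - c * a) * p = 0 := by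
    calc (1 - c * a) * p = (k * (1 - p)) * p := by rw [← hk]
      _ = k * (p - p * p) := by noncomm_ring
      _ = 0 := by rw [hp, sub_self, mul_zero]
  have hcap : c * (a * p) = p := by
    have h' : p - c * (a * p) = 0 := by
      calc p - c * (a * p) = (1 - c * a) * p := by noncomm_ring
        _ = 0 := k2
    exact (sub_eq_zero.mp h').symm
  have k3 : (1 : A) - a * c = q * (1 - a * c) := by
    have h' : (1 - q) * (1 - a * c) = 0 := by
      calc (1 - q) * (1 - a * c) = (1 - q) - (1 - q) * (a * c) := by noncomm_ring
        _ = 0 := by rw [k1, sub_self]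
    calc (1 : A) - a * c = q * (1 - a * c) + (1 - q) * (1 - a * c) := by noncomm_ring
      _ = q * (1 - a * c) := by rw [h', add_zero]
  refine ⟨c, hc, ?_, ?_⟩
  · ext x
    constructor
    · rintro ⟨y, rfl⟩
      exact ⟨c * y, by rw [← mul_assoc, hpc]⟩
    · rintro ⟨y, rfl⟩
      refine ⟨a * p * y, ?_⟩
      calc p * y = (c * (a * p)) * y := by rw [hcap]
        _ = c * (a * p * y) := by noncomm_ring
  · ext x
    constructor
    · intro hx
      have hx' : c * x = 0 := hx
      refine ⟨(1 - a * c) * x, ?_⟩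
      have h1 : (1 - a * c) * x = x := by
        calc (1 - a * c) * x = x - a * (c * x) := by noncomm_ring
          _ = x := by rw [hx', mul_zero, sub_zero]
      calc x = (1 - a * c) * x := h1.symm
        _ = (q * (1 - a * c)) * x := by rw [← k3]
        _ = q * ((1 - a * c) * x) := by noncomm_ring
    · rintro ⟨y, rfl⟩
      show c * (q * y) = 0
      rw [← mul_assoc, hcq, zero_mul]

lemma one_to_three (a p q : A) (hp : p * p = p) (hq : q * q = q)
    (h : ∃ b : A, b * a * b = b ∧ Rr b = Rr p ∧ Kr b = Rr q) :
    (∀ x : A, x * a = 0 → (∃ y, x = y * (1 - q)) → x = 0) ∧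
      (∀ z : A, ∃ u v : A, z = u * (1 - q) * a + v * (1 - p)) ∧
      (∀ x : A, (∃ u, x = u * ((1 - q) * a)) → (∃ v, x = v * (1 - p)) → x = 0) := by
  obtain ⟨b, hb, hR, hK⟩ := h
  obtain ⟨hpb, hbq, k1, k2⟩ := cond1_facts a p q b hp hq hb hR hK
  have hb1q : b * (1 - q) = b := by rw [mul_sub, mul_one, hbq, sub_zero]
  refine ⟨?_, ?_, ?_⟩
  · rintro x hxa ⟨y, rfl⟩
    calc y * (1 - q) = y * ((1 - q) * (a * b)) := by rw [k1]
      _ = (y * (1 - q) * a) * b := by noncomm_ring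
      _ = 0 := by rw [hxa, zero_mul]
  · intro z
    refine ⟨z * b, z - z * (b * a), ?_⟩
    have h1' : z * b * (1 - q) * a = z * (b * a) := by
      calc z * b * (1 - q) * a = z * (b * (1 - q)) * a := by noncomm_ring
        _ = z * (b * a) := by rw [hb1q, mul_assoc]
    have h2' : (z - z * (b * a)) * (1 - p) = z - z * (b * a) := by
      calc (z - z * (b * a)) * (1 - p) = z * ((1 - b * a) * (1 - p)) := by noncomm_ring
        _ = z * (1 - b * a) := by rw [k2]
        _ = z - z * (b * a) := by noncomm_ring
    rw [h1', h2']
    abel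
  · rintro x ⟨u, hu⟩ ⟨v, hv⟩
    have hxb : x * b = 0 := by
      calc x * b = v * (b - p * b) := by rw [hv]; noncomm_ring
        _ = 0 := by rw [hpb, sub_self, mul_zero]
    have hxb' : x * b = u * (1 - q) := by
      calc x * b = u * ((1 - q) * (a * b)) := by rw [hu]; noncomm_ring
        _ = u * (1 - q) := by rw [k1]
    have h0 : u * (1 - q) = 0 := by rw [← hxb', hxb]
    calc x = (u * (1 - q)) * a := by rw [hu]; noncomm_ring
      _ = 0 := by rw [h0, zero_mul]

lemma three_to_two (a p q : A) (hp : p * p = p) (hq : q * q = q)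
    (h1 : ∀ x : A, x * a = 0 → (∃ y, x = y * (1 - q)) → x = 0)
    (h2 : ∀ z : A, ∃ u v : A, z = u * (1 - q) * a + v * (1 - p))
    (h3 : ∀ x : A, (∃ u, x = u * ((1 - q) * a)) → (∃ v, x = v * (1 - p)) → x = 0) :
    ∃ c : A, c * a * c = c ∧ Rl c = Rl (1 - q) ∧ Kl c = Rl (1 - p) := by
  obtain ⟨u, v, huv⟩ := h2 1
  set t := u * (1 - q) with htdef
  set e := t * a with hedef
  set f := v * (1 - p) with hfdef
  have hef : e + f = 1 := by
    rw [hedef, htdef, hfdef, ← huv]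
  -- Step C: for x ∈ Rl((1-q)*a), x * e = x
  have stepC : ∀ x : A, (∃ w, x = w * ((1 - q) * a)) → x * e = x := by
    rintro x ⟨w, hw⟩
    have hxe : x * e = (x * u) * ((1 - q) * a) := by
      rw [hedef, htdef]; noncomm_ring
    have hxf0 : x * f = 0 := by
      apply h3
      · refine ⟨w - x * u, ?_⟩
        calc x * f = x * (e + f) - x * e := by noncomm_ring
          _ = x - x * e := by rw [hef, mul_one]
          _ = (w - x * u) * ((1 - q) * a) := by rw [hxe, hw]; noncomm_ring
      · exact ⟨x * v, by rw [hfdef]; noncomm_ring⟩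
    have hsum : x * e + x * f = x := by rw [← mul_add, hef, mul_one]
    rw [hxf0, add_zero] at hsum
    exact hsum
  -- Step D: for y ∈ Rl(1-p), y * e = 0
  have stepD : ∀ y : A, (∃ w, y = w * (1 - p)) → y * e = 0 := by
    rintro y ⟨w, hw⟩
    apply h3
    · exact ⟨y * u, by rw [hedef, htdef]; noncomm_ring⟩
    · refine ⟨w - y * v, ?_⟩
      calc y * e = y * (e + f) - y * f := by noncomm_ring
        _ = y - y * f := by rw [hef, mul_one]
        _ = (w - y * v) * (1 - p) := by rw [hfdef, hw]; noncomm_ring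
  have hee : e * e = e := stepC e ⟨u, by rw [hedef, htdef]; noncomm_ring⟩
  have htat : t * a * t = t := by
    have hz : t * a * t - t = 0 := by
      apply h1
      · calc (t * a * t - t) * a = e * e - e := by rw [hedef]; noncomm_ring
          _ = 0 := by rw [hee, sub_self]
      · refine ⟨t * a * u - u, ?_⟩
        rw [htdef]; noncomm_ring
    exact sub_eq_zero.mp hz
  have h1q : (1 : A) - q = (1 - q) * a * t := by
    have hxe : ((1 - q) * a) * e = (1 - q) * a := stepC _ ⟨1, (one_mul _).symm⟩
    have hd : ((1 : A) - q) - (1 - q) * a * t = 0 := by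
      apply h1
      · calc ((1 - q) - (1 - q) * a * t) * a = (1 - q) * a - ((1 - q) * a) * e := by
              rw [hedef]; noncomm_ring
          _ = 0 := by rw [hxe, sub_self]
      · refine ⟨1 - (1 - q) * a * u, ?_⟩
        rw [htdef]; noncomm_ring
    exact sub_eq_zero.mp hd
  have h1pt : (1 - p) * t = 0 := by
    apply h1
    · calc ((1 - p) * t) * a = (1 - p) * e := by rw [hedef]; noncomm_ring
        _ = 0 := stepD _ ⟨1, (one_mul _).symm⟩
    · exact ⟨(1 - p) * u, by rw [htdef]; noncomm_ring⟩
  refine ⟨t, htat, ?_, ?_⟩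
  · ext x
    constructor
    · rintro ⟨y, rfl⟩
      exact ⟨y * u, by rw [htdef]; noncomm_ring⟩
    · rintro ⟨y, rfl⟩
      refine ⟨y * ((1 - q) * a), ?_⟩
      calc y * (1 - q) = y * ((1 - q) * a * t) := by rw [← h1q]
        _ = y * ((1 - q) * a) * t := by noncomm_ring
  · ext x
    constructor
    · intro hx
      have hx' : x * t = 0 := hx
      have hxe : x * e = 0 := by
        calc x * e = (x * t) * a := by rw [hedef]; noncomm_ring
          _ = 0 := by rw [hx', zero_mul]
      have hsum : x * e + x * f = x := by rw [← mul_add, hef, mul_one]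
      refine ⟨x * v, ?_⟩
      calc x = x * e + x * f := hsum.symm
        _ = x * f := by rw [hxe, zero_add]
        _ = (x * v) * (1 - p) := by rw [hfdef]; noncomm_ring
    · rintro ⟨y, rfl⟩
      show y * (1 - p) * t = 0
      calc y * (1 - p) * t = y * ((1 - p) * t) := by noncomm_ring
        _ = 0 := by rw [h1pt, mul_zero]

end Helpers

theorem stmt1 {A : Type*} [NormedRing A] [NormedAlgebra ℂ A] [CompleteSpace A]
    (a p q : A) (hp : p * p = p) (hq : q * q = q) :
    ((∃ b : A, b * a * b = b ∧ Rr b = Rr p ∧ Kr b = Rr q) ↔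
      (∃ c : A, c * a * c = c ∧ Rl c = Rl (1 - q) ∧ Kl c = Rl (1 - p))) ∧
    ((∃ b : A, b * a * b = b ∧ Rr b = Rr p ∧ Kr b = Rr q) ↔
      (Kl a ∩ Rl (1 - q) = {0} ∧
        (∀ z : A, ∃ u v : A, z = u * (1 - q) * a + v * (1 - p)) ∧
        Rl ((1 - q) * a) ∩ Rl (1 - p) = {0})) := by
  constructor
  · exact ⟨one_to_two a p q hp hq, two_to_one a p q hp hq⟩
  · constructor
    · intro h
      obtain ⟨c1, c2, c3⟩ := one_to_three a p q hp hq h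
      refine ⟨?_, c2, ?_⟩
      · ext x
        simp only [Set.mem_inter_iff, Set.mem_singleton_iff]
        constructor
        · rintro ⟨hxa, hxq⟩
          exact c1 x hxa hxq
        · rintro rfl
          exact ⟨zero_mul a, ⟨0, (zero_mul _).symm⟩⟩
      · ext x
        simp only [Set.mem_inter_iff, Set.mem_singleton_iff]
        constructor
        · rintro ⟨hxI, hxJ⟩
          exact c3 x hxI hxJ
        · rintro rfl
          exact ⟨⟨0, (zero_mul _).symm⟩, ⟨0, (zero_mul _).symm⟩⟩
    · rintro ⟨h1, h2, h3⟩
      apply two_to_one a p q hp hq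
      apply three_to_two a p q hp hq
      · intro x hxa hxq
        have hmem : x ∈ Kl a ∩ Rl (1 - q) := ⟨hxa, hxq⟩
        rw [h1] at hmem
        exact hmem
      · exact h2
      · intro x hxI hxJ
        have hmem : x ∈ Rl ((1 - q) * a) ∩ Rl (1 - p) := ⟨hxI, hxJ⟩
        rw [h3] at hmem
        exact hmem
end

section
/- Let A be a complex unital Banach algebra, let a, δa ∈ A, let p, q ∈ A be idempotents, and suppose b ∈ A satisfies b·a·b = b, R_r(b) = R_r(p) and K_r(b) = R_r(q) (i.e., b = a^{(2,l)}_{p,q}). Put ā = a + δa. The following are equivalent: (1) 1 + δa·b is invertible in A; (2) 1 + b·δa is invertible in A; (3) there exists w ∈ A with w·ā·w = w, R_r(w) = R_r(p) and K_r(w) = R_r(q) (i.e., ā^{(2,l)}_{p,q} exists). In this case ā^{(2,l)}_{p,q} = b·(1 + δa·b)⁻¹ = (1 + b·δa)⁻¹·b. -/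
private lemma unit_swap {A : Type*} [Ring A] {x y : A} (h : IsUnit (1 + x * y)) :
    IsUnit (1 + y * x) := by
  set i := Ring.inverse (1 + x * y) with hi
  have h1 : (1 + x * y) * i = 1 := Ring.mul_inverse_cancel _ h
  have h2 : i * (1 + x * y) = 1 := Ring.inverse_mul_cancel _ h
  have e1 : (1 + y * x) * (1 - y * i * x) = 1 + y * x - y * ((1 + x * y) * i) * x := by
    noncomm_ring
  have e2 : (1 - y * i * x) * (1 + y * x) = 1 + y * x - y * (i * (1 + x * y)) * x := by
    noncomm_ring
  rw [h1] at e1; rw [h2] at e2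
  refine ⟨⟨1 + y * x, 1 - y * i * x, ?_, ?_⟩, rfl⟩
  · rw [e1]; noncomm_ring
  · rw [e2]; noncomm_ring

theorem stmt2 {A : Type*} [NormedRing A] [NormedAlgebra ℂ A] [CompleteSpace A]
    (a δa p q b : A) (hp : p * p = p) (hq : q * q = q)
    (hb1 : b * a * b = b) (hb2 : Rr b = Rr p) (hb3 : Kr b = Rr q) :
    (IsUnit (1 + δa * b) ↔ IsUnit (1 + b * δa)) ∧
    (IsUnit (1 + δa * b) ↔
      ∃ w : A, w * (a + δa) * w = w ∧ Rr w = Rr p ∧ Kr w = Rr q) ∧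
    (IsUnit (1 + δa * b) →
      (b * Ring.inverse (1 + δa * b) * (a + δa) * (b * Ring.inverse (1 + δa * b))
          = b * Ring.inverse (1 + δa * b) ∧
        Rr (b * Ring.inverse (1 + δa * b)) = Rr p ∧
        Kr (b * Ring.inverse (1 + δa * b)) = Rr q ∧
        b * Ring.inverse (1 + δa * b) = Ring.inverse (1 + b * δa) * b)) := by
  -- forward construction, given invertibility
  have main : ∀ hU : IsUnit (1 + δa * b),
      b * Ring.inverse (1 + δa * b) * (a + δa) * (b * Ring.inverse (1 + δa * b))
          = b * Ring.inverse (1 + δa * b) ∧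
        Rr (b * Ring.inverse (1 + δa * b)) = Rr p ∧
        Kr (b * Ring.inverse (1 + δa * b)) = Rr q ∧
        b * Ring.inverse (1 + δa * b) = Ring.inverse (1 + b * δa) * b := by
    intro hU
    have hV : IsUnit (1 + b * δa) := unit_swap hU
    set u := Ring.inverse (1 + δa * b) with hudef
    set v := Ring.inverse (1 + b * δa) with hvdef
    have huc : (1 + δa * b) * u = 1 := Ring.mul_inverse_cancel _ hU
    have hcu : u * (1 + δa * b) = 1 := Ring.inverse_mul_cancel _ hU
    have hvc : (1 + b * δa) * v = 1 := Ring.mul_inverse_cancel _ hV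
    have hcv : v * (1 + b * δa) = 1 := Ring.inverse_mul_cancel _ hV
    -- key : (1 + b*δa) * (b*u) = b
    have key : (1 + b * δa) * (b * u) = b := by
      have : (1 + b * δa) * (b * u) = b * ((1 + δa * b) * u) := by noncomm_ring
      rw [this, huc, mul_one]
    have hw_eq : b * u = v * b := by
      calc b * u = (v * (1 + b * δa)) * (b * u) := by rw [hcv, one_mul]
        _ = v * ((1 + b * δa) * (b * u)) := by rw [mul_assoc]
        _ = v * b := by rw [key]
    refine ⟨?_, ?_, ?_, hw_eq⟩
    · -- w (a+δa) w = w
      have h1 : b * (a + δa) * b = (1 + b * δa) * b := by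
        calc b * (a + δa) * b = b * a * b + b * δa * b := by noncomm_ring
          _ = b + b * δa * b := by rw [hb1]
          _ = (1 + b * δa) * b := by noncomm_ring
      calc b * u * (a + δa) * (b * u) = (v * b) * (a + δa) * (b * u) := by rw [hw_eq]
        _ = v * ((b * (a + δa) * b) * u) := by noncomm_ring
        _ = v * (((1 + b * δa) * b) * u) := by rw [h1]
        _ = (v * (1 + b * δa)) * (b * u) := by noncomm_ring
        _ = b * u := by rw [hcv, one_mul]
    · -- range
      rw [← hb2]
      ext y
      constructor
      · rintro ⟨x, rfl⟩; exact ⟨u * x, by rw [mul_assoc]⟩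
      · rintro ⟨x, rfl⟩
        refine ⟨(1 + δa * b) * x, ?_⟩
        calc b * x = b * 1 * x := by rw [mul_one]
          _ = b * (u * (1 + δa * b)) * x := by rw [hcu]
          _ = b * u * ((1 + δa * b) * x) := by noncomm_ring
    · -- kernel
      rw [← hb3]
      ext z
      show b * u * z = 0 ↔ b * z = 0
      constructor
      · intro h
        have : v * (b * z) = 0 := by rw [← mul_assoc, ← hw_eq, h]
        calc b * z = ((1 + b * δa) * v) * (b * z) := by rw [hvc, one_mul]
          _ = (1 + b * δa) * (v * (b * z)) := by rw [mul_assoc]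
          _ = 0 := by rw [this, mul_zero]
      · intro h
        rw [hw_eq, mul_assoc, h, mul_zero]
  have fwd : IsUnit (1 + δa * b) →
      ∃ w : A, w * (a + δa) * w = w ∧ Rr w = Rr p ∧ Kr w = Rr q := fun hU =>
    ⟨b * Ring.inverse (1 + δa * b), (main hU).1, (main hU).2.1, (main hU).2.2.1⟩
  have bwd : (∃ w : A, w * (a + δa) * w = w ∧ Rr w = Rr p ∧ Kr w = Rr q) →
      IsUnit (1 + δa * b) := by
    rintro ⟨w, hw1, hw2, hw3⟩
    have hRwb : Rr w = Rr b := hw2.trans hb2.symm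
    have hKwb : ∀ z : A, w * z = 0 ↔ b * z = 0 := fun z =>
      Set.ext_iff.mp (hw3.trans hb3.symm) z
    obtain ⟨s, hs⟩ : w ∈ Rr b := hRwb ▸ (⟨1, (mul_one w).symm⟩ : w ∈ Rr w)
    obtain ⟨t, ht⟩ : b ∈ Rr w := hRwb.symm ▸ (⟨1, (mul_one b).symm⟩ : b ∈ Rr b)
    have hbaw : b * a * w = w := by
      calc b * a * w = (b * a * b) * s := by rw [hs]; noncomm_ring
        _ = b * s := by rw [hb1]
        _ = w := hs.symm
    have hwab2 : w * (a + δa) * b = b := by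
      calc w * (a + δa) * b = (w * (a + δa) * w) * t := by rw [ht]; noncomm_ring
        _ = w * t := by rw [hw1]
        _ = b := ht.symm
    have hbaw2 : b * (a + δa) * w = b := by
      have h0 : w * (1 - (a + δa) * w) = 0 := by
        calc w * (1 - (a + δa) * w) = w - w * (a + δa) * w := by noncomm_ring
          _ = 0 := by rw [hw1, sub_self]
      have h0' : b * (1 - (a + δa) * w) = 0 := (hKwb _).mp h0
      have : b - b * (a + δa) * w = 0 := by
        calc b - b * (a + δa) * w = b * (1 - (a + δa) * w) := by noncomm_ring
          _ = 0 := h0'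
      exact (sub_eq_zero.mp this).symm
    have hwab : w * a * b = w := by
      have h0 : b * (1 - a * b) = 0 := by
        calc b * (1 - a * b) = b - b * a * b := by noncomm_ring
          _ = 0 := by rw [hb1, sub_self]
      have h0' : w * (1 - a * b) = 0 := (hKwb _).mpr h0
      have : w - w * a * b = 0 := by
        calc w - w * a * b = w * (1 - a * b) := by noncomm_ring
          _ = 0 := h0'
      exact (sub_eq_zero.mp this).symm
    have hbdw : b * δa * w = b - w := by
      calc b * δa * w = b * (a + δa) * w - b * a * w := by noncomm_ring
        _ = b - w := by rw [hbaw2, hbaw]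
    have hwdb : w * δa * b = b - w := by
      calc w * δa * b = w * (a + δa) * b - w * a * b := by noncomm_ring
        _ = b - w := by rw [hwab2, hwab]
    have hV : IsUnit (1 + b * δa) := by
      refine ⟨⟨1 + b * δa, 1 - w * δa, ?_, ?_⟩, rfl⟩
      · calc (1 + b * δa) * (1 - w * δa)
            = 1 + b * δa - w * δa - (b * δa * w) * δa := by noncomm_ring
          _ = 1 + b * δa - w * δa - (b - w) * δa := by rw [hbdw]
          _ = 1 := by noncomm_ring
      · calc (1 - w * δa) * (1 + b * δa)
            = 1 + b * δa - w * δa - (w * δa * b) * δa := by noncomm_ring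
          _ = 1 + b * δa - w * δa - (b - w) * δa := by rw [hwdb]
          _ = 1 := by noncomm_ring
    exact unit_swap hV
  exact ⟨⟨fun h => unit_swap h, fun h => unit_swap h⟩, ⟨fwd, bwd⟩, main⟩
end

section
/- Let A be a complex unital Banach algebra, let a, δa ∈ A, let p, q ∈ A be idempotents, and suppose b ∈ A satisfies b·a·b = b, R_r(b) = R_r(p) and K_r(b) = R_r(q) (i.e., b = a^{(2,l)}_{p,q}). Assume 1 + b·δa is invertible. Put ā = a + δa and f = (1 + b·δa)⁻¹·(1 − b·a). Then: (1) f is idempotent (f² = f) and K_r(ā) ⊆ R_r(f); (2) K_r(ā) = R_r(f) if and only if R_r(ā) ∩ R_r(q) = {0}. -/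
/-!
Write `ā = a + δa`, `u = 1 + b δa` and `e = 1 - b a`. Since `b a b = b`, `e` is idempotent and
`e u = e`, so `f = u⁻¹ e` is idempotent; moreover `b ā = u - e`. Hence every `x` with `b ā x = 0`
satisfies `u x = e x`, i.e. `x = f x`, which gives `K_r(ā) ⊆ R_r(f)`; and `b ā f = (u - e) u⁻¹ e = 0`.
So `K_r(ā) = R_r(f)` amounts to `ā f = 0`, and `ā f` is the universal element of
`R_r(ā) ∩ K_r(b) = R_r(ā) ∩ R_r(q)`: it lies there, and every `ā x` there equals `ā f x`.
-/

section OuterInverse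

variable {R : Type*} [Ring R]

theorem mem_Rr_self (a : R) : a ∈ Rr a := ⟨1, (mul_one a).symm⟩

theorem Rr_subset_Kr_iff {c f : R} : Rr f ⊆ Kr c ↔ c * f = 0 := by
  refine ⟨fun h => h (mem_Rr_self f), ?_⟩
  rintro h _ ⟨x, rfl⟩
  show c * (f * x) = 0
  rw [← mul_assoc, h, zero_mul]

theorem isIdempotentElem_mul_of_mul_mul_eq {a b : R} (hb : b * a * b = b) :
    IsIdempotentElem (b * a) := by
  show b * a * (b * a) = b * a
  rw [← mul_assoc, hb]

theorem one_sub_mul_mul_one_add_mul {a b : R} (hb : b * a * b = b) (c : R) :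
    (1 - b * a) * (1 + b * c) = 1 - b * a := by
  have hbc : b * a * (b * c) = b * c := by rw [← mul_assoc, hb]
  calc (1 - b * a) * (1 + b * c) = 1 - b * a + (b * c - b * a * (b * c)) := by noncomm_ring
    _ = 1 - b * a := by rw [hbc, sub_self, add_zero]

theorem mul_inverse_eq_of_mul_eq {e u : R} (hu : IsUnit u) (heu : e * u = e) :
    e * Ring.inverse u = e :=
  calc e * Ring.inverse u = e * u * Ring.inverse u := by rw [heu]
    _ = e := Ring.mul_inverse_cancel_right u e hu

theorem IsIdempotentElem.inverse_mul_of_mul_eq {e u : R} (he : IsIdempotentElem e) (hu : IsUnit u)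
    (heu : e * u = e) : IsIdempotentElem (Ring.inverse u * e) := by
  show Ring.inverse u * e * (Ring.inverse u * e) = Ring.inverse u * e
  rw [mul_assoc, ← mul_assoc e, mul_inverse_eq_of_mul_eq hu heu, he.eq]

noncomputable def perturbationIdempotent (a δa b : R) : R :=
  Ring.inverse (1 + b * δa) * (1 - b * a)

variable {a δa b : R}

theorem isIdempotentElem_perturbationIdempotent (hb : b * a * b = b) (hu : IsUnit (1 + b * δa)) :
    IsIdempotentElem (perturbationIdempotent a δa b) :=
  (isIdempotentElem_mul_of_mul_mul_eq hb).one_sub.inverse_mul_of_mul_eq hu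
    (one_sub_mul_mul_one_add_mul hb δa)

theorem mul_add_eq_one_add_mul_sub (a δa b : R) :
    b * (a + δa) = (1 + b * δa) - (1 - b * a) := by
  noncomm_ring

theorem eq_perturbationIdempotent_mul (hu : IsUnit (1 + b * δa)) {x : R}
    (hx : b * ((a + δa) * x) = 0) : x = perturbationIdempotent a δa b * x := by
  have hux : (1 + b * δa) * x = (1 - b * a) * x := by
    rwa [← mul_assoc, mul_add_eq_one_add_mul_sub, sub_mul, sub_eq_zero] at hx
  rw [perturbationIdempotent, mul_assoc, ← hux, Ring.inverse_mul_cancel_left _ _ hu]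

theorem Kr_subset_Rr_perturbationIdempotent (hu : IsUnit (1 + b * δa)) :
    Kr (a + δa) ⊆ Rr (perturbationIdempotent a δa b) := fun x hx =>
  ⟨x, eq_perturbationIdempotent_mul hu (by rw [show (a + δa) * x = 0 from hx, mul_zero])⟩

theorem mul_mul_perturbationIdempotent_eq_zero (hb : b * a * b = b) (hu : IsUnit (1 + b * δa)) :
    b * ((a + δa) * perturbationIdempotent a δa b) = 0 := by
  rw [← mul_assoc, mul_add_eq_one_add_mul_sub, perturbationIdempotent, sub_mul,
    Ring.mul_inverse_cancel_left _ _ hu, ← mul_assoc,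
    mul_inverse_eq_of_mul_eq hu (one_sub_mul_mul_one_add_mul hb δa),
    (isIdempotentElem_mul_of_mul_mul_eq hb).one_sub.eq, sub_self]

theorem mul_perturbationIdempotent_eq_zero_iff (hb : b * a * b = b) (hu : IsUnit (1 + b * δa)) :
    (a + δa) * perturbationIdempotent a δa b = 0 ↔ Rr (a + δa) ∩ Kr b = {0} := by
  constructor
  · intro hf
    refine Set.eq_singleton_iff_unique_mem.mpr ⟨⟨⟨0, (mul_zero _).symm⟩, mul_zero b⟩, ?_⟩
    rintro _ ⟨⟨x, rfl⟩, hx⟩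
    rw [eq_perturbationIdempotent_mul hu hx, ← mul_assoc, hf, zero_mul]
  · intro h
    have hmem : (a + δa) * perturbationIdempotent a δa b ∈ Rr (a + δa) ∩ Kr b :=
      ⟨⟨_, rfl⟩, mul_mul_perturbationIdempotent_eq_zero hb hu⟩
    rwa [h] at hmem

theorem Kr_eq_Rr_perturbationIdempotent_iff (hb : b * a * b = b) (hu : IsUnit (1 + b * δa)) :
    Kr (a + δa) = Rr (perturbationIdempotent a δa b) ↔ Rr (a + δa) ∩ Kr b = {0} := by
  rw [← mul_perturbationIdempotent_eq_zero_iff hb hu, ← Rr_subset_Kr_iff]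
  exact ⟨fun h => h.ge, (Kr_subset_Rr_perturbationIdempotent hu).antisymm⟩

end OuterInverse

theorem stmt3_general {A : Type*} [NormedRing A]
    (a δa q b : A)
    (hb1 : b * a * b = b) (hb3 : Kr b = Rr q)
    (hu : IsUnit (1 + b * δa)) :
    (Ring.inverse (1 + b * δa) * (1 - b * a) * (Ring.inverse (1 + b * δa) * (1 - b * a))
        = Ring.inverse (1 + b * δa) * (1 - b * a) ∧
      Kr (a + δa) ⊆ Rr (Ring.inverse (1 + b * δa) * (1 - b * a))) ∧
    (Kr (a + δa) = Rr (Ring.inverse (1 + b * δa) * (1 - b * a)) ↔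
      Rr (a + δa) ∩ Rr q = {0}) := by
  rw [← hb3]
  exact ⟨⟨isIdempotentElem_perturbationIdempotent hb1 hu, Kr_subset_Rr_perturbationIdempotent hu⟩,
    Kr_eq_Rr_perturbationIdempotent_iff hb1 hu⟩

theorem stmt3 {A : Type*} [NormedRing A] [NormedAlgebra ℂ A] [CompleteSpace A]
    (a δa p q b : A) (hp : p * p = p) (hq : q * q = q)
    (hb1 : b * a * b = b) (hb2 : Rr b = Rr p) (hb3 : Kr b = Rr q)
    (hu : IsUnit (1 + b * δa)) :
    (Ring.inverse (1 + b * δa) * (1 - b * a) * (Ring.inverse (1 + b * δa) * (1 - b * a))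
        = Ring.inverse (1 + b * δa) * (1 - b * a) ∧
      Kr (a + δa) ⊆ Rr (Ring.inverse (1 + b * δa) * (1 - b * a))) ∧
    (Kr (a + δa) = Rr (Ring.inverse (1 + b * δa) * (1 - b * a)) ↔
      Rr (a + δa) ∩ Rr q = {0}) :=
  stmt3_general a δa q b hb1 hb3 hu
end

section
/- Let A be a complex unital Banach algebra, let a, δa ∈ A, let p, q ∈ A be idempotents, and suppose b ∈ A satisfies b·a·b = b, R_r(b) = R_r(p) and K_r(b) = R_r(q) (i.e., b = a^{(2,l)}_{p,q}). Assume 1 + b·δa is invertible. Put ā = a + δa and w = (1 + b·δa)⁻¹·b. The following are equivalent: (1) ā·w·ā = ā, w·ā·w = w, R_r(w) = R_r(p) and K_r(w) = R_r(q) (i.e., w = ā^{(l)}_{p,q}); (2) R_r(ā) ∩ R_r(q) = {0}; (3) ā·(1 + b·δa)⁻¹·(1 − b·a) = 0; (4) (1 − a·b)·(1 + δa·b)⁻¹·ā = 0. -/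
theorem stmt4 {A : Type*} [NormedRing A] [NormedAlgebra ℂ A] [CompleteSpace A]
    (a δa p q b : A) (hp : p * p = p) (hq : q * q = q)
    (hb1 : b * a * b = b) (hb2 : Rr b = Rr p) (hb3 : Kr b = Rr q)
    (hu : IsUnit (1 + b * δa)) :
    (((a + δa) * (Ring.inverse (1 + b * δa) * b) * (a + δa) = a + δa ∧
        (Ring.inverse (1 + b * δa) * b) * (a + δa) * (Ring.inverse (1 + b * δa) * b)
          = Ring.inverse (1 + b * δa) * b ∧
        Rr (Ring.inverse (1 + b * δa) * b) = Rr p ∧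
        Kr (Ring.inverse (1 + b * δa) * b) = Rr q) ↔
      Rr (a + δa) ∩ Rr q = {0}) ∧
    (Rr (a + δa) ∩ Rr q = {0} ↔
      (a + δa) * Ring.inverse (1 + b * δa) * (1 - b * a) = 0) ∧
    ((a + δa) * Ring.inverse (1 + b * δa) * (1 - b * a) = 0 ↔
      (1 - a * b) * Ring.inverse (1 + δa * b) * (a + δa) = 0) := by
  set u : A := 1 + b * δa with hu_def
  set v : A := 1 + δa * b with hv_def
  set iu : A := Ring.inverse u with hiu_def
  have hiu1 : u * iu = 1 := Ring.mul_inverse_cancel u hu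
  have hiu2 : iu * u = 1 := Ring.inverse_mul_cancel u hu
  -- v is a unit with inverse 1 - δa * iu * b
  have hv : IsUnit v := by
    refine ⟨⟨v, 1 - δa * iu * b, ?_, ?_⟩, rfl⟩
    · have h1 : b * δa * iu = 1 - iu := by
        refine eq_sub_of_add_eq' ?_
        rw [← hiu1, hu_def]; noncomm_ring
      calc v * (1 - δa * iu * b) = 1 + δa * b - δa * iu * b - δa * (b * δa * iu) * b := by
            rw [hv_def]; noncomm_ring
        _ = 1 := by rw [h1]; noncomm_ring
    · have h2 : iu * (b * δa) = 1 - iu := by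
        refine eq_sub_of_add_eq' ?_
        rw [← hiu2, hu_def]; noncomm_ring
      calc (1 - δa * iu * b) * v = 1 + δa * b - δa * iu * b - δa * (iu * (b * δa)) * b := by
            rw [hv_def]; noncomm_ring
        _ = 1 := by rw [h2]; noncomm_ring
  set iv : A := Ring.inverse v with hiv_def
  have hiv1 : v * iv = 1 := Ring.mul_inverse_cancel v hv
  have hiv2 : iv * v = 1 := Ring.inverse_mul_cancel v hv
  set w : A := iu * b with hw_def
  have hbd : iu * (b * δa) = 1 - iu := by
    refine eq_sub_of_add_eq' ?_
    rw [← hiu2, hu_def]; noncomm_ring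
  have hdb : (δa * b) * iv = 1 - iv := by
    refine eq_sub_of_add_eq' ?_
    rw [← hiv1, hv_def]; noncomm_ring
  have hswap : b * v = u * b := by rw [hu_def, hv_def]; noncomm_ring
  clear_value w iv iu v u
  have hw2 : w = b * iv := by
    have h1 : w * v = b := by
      calc w * v = iu * (b * v) := by rw [hw_def]; noncomm_ring
        _ = iu * (u * b) := by rw [hswap]
        _ = (iu * u) * b := by noncomm_ring
        _ = b := by rw [hiu2, one_mul]
    calc w = w * (v * iv) := by rw [hiv1, mul_one]
      _ = (w * v) * iv := by noncomm_ring
      _ = b * iv := by rw [h1]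
  -- kernels agree
  have hKr : Kr w = Kr b := by
    ext x
    simp only [Kr, Set.mem_setOf_eq]
    constructor
    · intro h
      have h0 : u * (w * x) = 0 := by rw [h, mul_zero]
      calc b * x = (u * iu) * (b * x) := by rw [hiu1, one_mul]
        _ = u * (w * x) := by rw [hw_def]; noncomm_ring
        _ = 0 := h0
    · intro h
      calc w * x = iu * (b * x) := by rw [hw_def]; noncomm_ring
        _ = 0 := by rw [h, mul_zero]
  -- ranges agree
  have hRr : Rr w = Rr b := by
    ext y
    simp only [Rr, Set.mem_setOf_eq]
    constructor
    · rintro ⟨x, rfl⟩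
      exact ⟨iv * x, by rw [hw2]; noncomm_ring⟩
    · rintro ⟨x, rfl⟩
      refine ⟨v * x, ?_⟩
      calc b * x = (iu * u) * (b * x) := by rw [hiu2, one_mul]
        _ = iu * ((u * b) * x) := by noncomm_ring
        _ = iu * ((b * v) * x) := by rw [hswap]
        _ = w * (v * x) := by rw [hw_def]; noncomm_ring
  -- w (a+δa) w = w always
  have hbab : b * (a + δa) * b = u * b := by
    rw [hu_def]
    calc b * (a + δa) * b = b * a * b + b * δa * b := by noncomm_ring
      _ = b + b * δa * b := by rw [hb1]
      _ = (1 + b * δa) * b := by noncomm_ring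
  have id3 : w * (a + δa) * w = w := by
    have step : w * (a + δa) * w = iu * (b * (a + δa) * b) * iv := by
      nth_rewrite 2 [hw2]
      rw [hw_def]; noncomm_ring
    calc w * (a + δa) * w = iu * (b * (a + δa) * b) * iv := step
      _ = iu * (u * b) * iv := by rw [hbab]
      _ = (iu * u) * (b * iv) := by noncomm_ring
      _ = w := by rw [hiu2, one_mul, ← hw2]
  -- the two "gap" identities
  have id4 : (a + δa) * iu * (1 - b * a) = (a + δa) - (a + δa) * w * (a + δa) := by
    have h : (a + δa) * w * (a + δa)
        = (a + δa) * (iu * (b * a)) + (a + δa) * (iu * (b * δa)) := by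
      rw [hw_def]; noncomm_ring
    rw [h, hbd]; noncomm_ring
  have id5 : (1 - a * b) * iv * (a + δa) = (a + δa) - (a + δa) * w * (a + δa) := by
    have h : (a + δa) * w * (a + δa)
        = a * (b * iv) * (a + δa) + ((δa * b) * iv) * (a + δa) := by
      rw [hw2]; noncomm_ring
    rw [h, hdb]; noncomm_ring
  have h3E : (a + δa) * iu * (1 - b * a) = 0 ↔ (a + δa) * w * (a + δa) = a + δa := by
    rw [id4, sub_eq_zero, eq_comm]
  have h4E : (1 - a * b) * iv * (a + δa) = 0 ↔ (a + δa) * w * (a + δa) = a + δa := by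
    rw [id5, sub_eq_zero, eq_comm]
  -- E → (2)
  have hE2 : (a + δa) * w * (a + δa) = a + δa → Rr (a + δa) ∩ Rr q = {0} := by
    intro hE
    apply Set.eq_singleton_iff_unique_mem.mpr
    constructor
    · exact ⟨⟨0, by rw [mul_zero]⟩, ⟨0, by rw [mul_zero]⟩⟩
    · rintro y ⟨⟨x, rfl⟩, hyq⟩
      have hby : b * ((a + δa) * x) = 0 := by
        have hk : (a + δa) * x ∈ Kr b := by rw [hb3]; exact hyq
        exact hk
      calc (a + δa) * x = ((a + δa) * w * (a + δa)) * x := by rw [hE]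
        _ = (a + δa) * (iu * (b * ((a + δa) * x))) := by rw [hw_def]; noncomm_ring
        _ = 0 := by rw [hby, mul_zero, mul_zero]
  -- (2) → stmt3
  have h23 : Rr (a + δa) ∩ Rr q = {0} → (a + δa) * iu * (1 - b * a) = 0 := by
    intro h2
    set z : A := (a + δa) * iu * (1 - b * a) with hz_def
    have hzr : z ∈ Rr (a + δa) := ⟨iu * (1 - b * a), by rw [hz_def]; noncomm_ring⟩
    have hwz : w * z = 0 := by
      have hz2 : z = (a + δa) - (a + δa) * w * (a + δa) := id4
      calc w * z = w * (a + δa) - (w * (a + δa) * w) * (a + δa) := by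
            rw [hz2]; noncomm_ring
        _ = 0 := by rw [id3, sub_self]
    have hbz : b * z = 0 := by
      calc b * z = (u * iu) * (b * z) := by rw [hiu1, one_mul]
        _ = u * (w * z) := by rw [hw_def]; noncomm_ring
        _ = 0 := by rw [hwz, mul_zero]
    have hzq : z ∈ Rr q := by rw [← hb3]; exact hbz
    have hmem : z ∈ ({0} : Set A) := h2 ▸ Set.mem_inter hzr hzq
    exact hmem
  refine ⟨?_, ⟨fun h2 => h23 h2, fun h3 => hE2 (h3E.mp h3)⟩, h3E.trans h4E.symm⟩
  constructor
  · rintro ⟨hE, -, -, -⟩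
    exact hE2 hE
  · intro h2
    exact ⟨h3E.mp (h23 h2), id3, hRr.trans hb2, hKr.trans hb3⟩
end

section
/- Let A be a complex unital Banach algebra, let a, δa ∈ A, let p, q ∈ A be idempotents, and suppose b ∈ A satisfies b·a·b = b, R_r(b) = R_r(p) and K_r(b) = R_r(q) (i.e., b = a^{(2,l)}_{p,q}). Assume 1 + b·δa is invertible and put ā = a + δa. The following are equivalent: (1) R_r(ā) ∩ R_r(q) = {0}; (2) {(1 + b·δa)⁻¹·y : y ∈ K_r(b·a)} = K_r(ā); (3) {(1 + δa·b)⁻¹·y : y ∈ R_r(ā)} = R_r(a·b). -/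
theorem stmt5 {A : Type*} [NormedRing A] [NormedAlgebra ℂ A] [CompleteSpace A]
    (a δa p q b : A) (hp : p * p = p) (hq : q * q = q)
    (hb1 : b * a * b = b) (hb2 : Rr b = Rr p) (hb3 : Kr b = Rr q)
    (hu : IsUnit (1 + b * δa)) :
    (Rr (a + δa) ∩ Rr q = {0} ↔
      (fun y => Ring.inverse (1 + b * δa) * y) '' Kr (b * a) = Kr (a + δa)) ∧
    (Rr (a + δa) ∩ Rr q = {0} ↔
      (fun y => Ring.inverse (1 + δa * b) * y) '' Rr (a + δa) = Rr (a * b)) := by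
  classical
  set c : A := a + δa with hc
  set ui : A := Ring.inverse (1 + b * δa) with hui
  have hUui : (1 + b * δa) * ui = 1 := Ring.mul_inverse_cancel _ hu
  have huiU : ui * (1 + b * δa) = 1 := Ring.inverse_mul_cancel _ hu
  -- explicit inverse of 1 + δa * b
  set vi : A := 1 - δa * ui * b with hvi
  have hVvi : (1 + δa * b) * vi = 1 := by
    have h1 : (1 + δa * b) * vi = 1 + δa * b - δa * ((1 + b * δa) * ui) * b := by
      rw [hvi]; noncomm_ring
    rw [h1, hUui]; noncomm_ring
  have hviV : vi * (1 + δa * b) = 1 := by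
    have h1 : vi * (1 + δa * b) = 1 + δa * b - δa * (ui * (1 + b * δa)) * b := by
      rw [hvi]; noncomm_ring
    rw [h1, huiU]; noncomm_ring
  have hVinv : Ring.inverse (1 + δa * b) = vi :=
    Ring.inverse_unit ⟨1 + δa * b, vi, hVvi, hviV⟩
  -- basic facts
  have hbq : b * q = 0 := by
    have : q ∈ Kr b := by rw [hb3]; exact ⟨q, hq.symm⟩
    exact this
  have hKbRq : ∀ x : A, b * x = 0 ↔ ∃ t, x = q * t := fun x => by
    constructor
    · intro h
      have : x ∈ Kr b := h
      rwa [hb3] at this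
    · rintro ⟨t, rfl⟩; rw [← mul_assoc, hbq, zero_mul]
  -- key identities
  have hbcb : b * (c * b) = (1 + b * δa) * b := by
    have h1 : b * (c * b) = b * a * b + b * δa * b := by rw [hc]; noncomm_ring
    rw [h1, hb1]; noncomm_ring
  have hbcb' : b * (c * b) = b * (1 + δa * b) := by rw [hbcb]; noncomm_ring
  have hA : ∀ x : A, b * a * ((1 + b * δa) * x) = b * (c * x) := by
    intro x
    have h1 : b * a * ((1 + b * δa) * x) = b * a * x + (b * a * b) * (δa * x) := by
      noncomm_ring
    rw [h1, hb1, hc]; noncomm_ring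
  have hB : ∀ s : A, (1 + δa * b) * (a * b * s) = c * (b * s) := by
    intro s
    have h1 : (1 + δa * b) * (a * b * s) = a * b * s + δa * ((b * a * b) * s) := by
      noncomm_ring
    rw [h1, hb1, hc]; noncomm_ring
  -- condition P
  have hP : (Rr c ∩ Rr q = {0}) ↔ ∀ x : A, b * (c * x) = 0 → c * x = 0 := by
    constructor
    · intro h1 x hx
      have hmem : c * x ∈ Rr c ∩ Rr q := by
        refine ⟨⟨x, rfl⟩, ?_⟩
        obtain ⟨t, ht⟩ := (hKbRq _).mp hx
        exact ⟨t, ht⟩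
      rw [h1] at hmem
      exact hmem
    · intro hPP
      ext y
      simp only [Set.mem_inter_iff, Set.mem_singleton_iff]
      constructor
      · rintro ⟨⟨x, rfl⟩, ⟨t, ht⟩⟩
        apply hPP
        rw [ht, ← mul_assoc, hbq, zero_mul]
      · rintro rfl
        exact ⟨⟨0, by rw [mul_zero]⟩, ⟨0, by rw [mul_zero]⟩⟩
  constructor
  · -- part (2)
    rw [hP]
    constructor
    · intro hPP
      ext x
      simp only [Set.mem_image]
      constructor
      · rintro ⟨y, hy, rfl⟩
        have hy' : b * a * y = 0 := hy
        show c * (ui * y) = 0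
        apply hPP
        have h2 : (1 + b * δa) * (ui * y) = y := by
          rw [← mul_assoc, hUui, one_mul]
        rw [← hA, h2, hy']
      · intro hx
        have hx' : c * x = 0 := hx
        refine ⟨(1 + b * δa) * x, ?_, ?_⟩
        · show b * a * ((1 + b * δa) * x) = 0
          rw [hA, hx', mul_zero]
        · show ui * ((1 + b * δa) * x) = x
          rw [← mul_assoc, huiU, one_mul]
    · intro h2 x hx
      have hmem : ui * ((1 + b * δa) * x) ∈ Kr c := by
        rw [← h2]
        refine ⟨(1 + b * δa) * x, ?_, rfl⟩
        show b * a * ((1 + b * δa) * x) = 0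
        rw [hA, hx]
      have h3 : ui * ((1 + b * δa) * x) = x := by rw [← mul_assoc, huiU, one_mul]
      rw [h3] at hmem
      exact hmem
  · -- part (3)
    rw [hVinv]
    constructor
    · intro h1
      ext y
      simp only [Set.mem_image]
      constructor
      · rintro ⟨z, ⟨x, rfl⟩, rfl⟩
        show vi * (c * x) ∈ Rr (a * b)
        set r : A := vi * (c * x) with hr
        have key : c * x = c * (b * r) := by
          have e1 : b * (c * (b * r)) = b * (c * x) := by
            calc b * (c * (b * r)) = (b * (c * b)) * r := by noncomm_ring
              _ = (b * (1 + δa * b)) * r := by rw [hbcb']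
              _ = b * (((1 + δa * b) * vi) * (c * x)) := by rw [hr]; noncomm_ring
              _ = b * (1 * (c * x)) := by rw [hVvi]
              _ = b * (c * x) := by rw [one_mul]
          have hbw : b * (c * x - c * (b * r)) = 0 := by
            rw [mul_sub, e1, sub_self]
          have hwmem : c * x - c * (b * r) ∈ Rr c ∩ Rr q := by
            refine ⟨⟨x - b * r, by noncomm_ring⟩, ?_⟩
            obtain ⟨t, ht⟩ := (hKbRq _).mp hbw
            exact ⟨t, ht⟩
          rw [h1] at hwmem
          exact sub_eq_zero.mp hwmem
        refine ⟨r, ?_⟩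
        calc r = vi * (c * x) := hr
          _ = vi * (c * (b * r)) := by rw [key]
          _ = vi * ((1 + δa * b) * (a * b * r)) := by rw [hB r]
          _ = (vi * (1 + δa * b)) * (a * b * r) := by noncomm_ring
          _ = a * b * r := by rw [hviV, one_mul]
      · rintro ⟨s, rfl⟩
        refine ⟨c * (b * s), ⟨b * s, rfl⟩, ?_⟩
        show vi * (c * (b * s)) = a * b * s
        calc vi * (c * (b * s)) = vi * ((1 + δa * b) * (a * b * s)) := by rw [hB s]
          _ = (vi * (1 + δa * b)) * (a * b * s) := by noncomm_ring
          _ = a * b * s := by rw [hviV, one_mul]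
    · intro h3
      rw [hP]
      intro x hx
      have hmem : vi * (c * x) ∈ Rr (a * b) := by
        rw [← h3]
        exact ⟨c * x, ⟨x, rfl⟩, rfl⟩
      obtain ⟨s, hs⟩ := hmem
      have hcx : c * x = c * (b * s) := by
        calc c * x = (1 + δa * b) * (vi * (c * x)) := by
              rw [← mul_assoc, hVvi, one_mul]
          _ = (1 + δa * b) * (a * b * s) := by rw [hs]
          _ = c * (b * s) := hB s
      have hz : (1 + b * δa) * (b * s) = 0 := by
        calc (1 + b * δa) * (b * s) = ((1 + b * δa) * b) * s := by noncomm_ring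
          _ = (b * (c * b)) * s := by rw [hbcb]
          _ = b * (c * (b * s)) := by noncomm_ring
          _ = b * (c * x) := by rw [← hcx]
          _ = 0 := hx
      have hbs : b * s = 0 := by
        have := congrArg (fun t => ui * t) hz
        simpa [← mul_assoc, huiU] using this
      rw [hcx, hbs, mul_zero]
end

section
/- Let A be a complex unital Banach algebra, let a, δa ∈ A, let p, q ∈ A be idempotents, and suppose b ∈ A satisfies a·b·a = a, b·a·b = b, R_r(b) = R_r(p) and K_r(b) = R_r(q) (i.e., b = a^{(l)}_{p,q}). Put ā = a + δa. The following are equivalent: (1) 1 + b·δa is invertible, R_r(ā) = K_r(q), and the element w = b·(1 + δa·b)⁻¹ satisfies ā·w·ā = ā, w·ā·w = w, R_r(w) = R_r(p), K_r(w) = R_r(q) (i.e., w = ā^{(l)}_{p,q}); (2) R_r(ā) ∩ R_r(q) = {0}, K_r(ā) ∩ R_r(p) = {0}, and {ā·y : y ∈ R_r(p)} = K_r(q). -/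
lemma mem_Rr_idem {A : Type*} [Ring A] {e : A} (he : e * e = e) {y : A} :
    y ∈ Rr e ↔ e * y = y := by
  constructor
  · rintro ⟨x, rfl⟩
    rw [← mul_assoc, he]
  · intro h
    exact ⟨y, h.symm⟩

theorem stmt6 {A : Type*} [NormedRing A] [NormedAlgebra ℂ A] [CompleteSpace A]
    (a δa p q b : A) (hp : p * p = p) (hq : q * q = q)
    (hb0 : a * b * a = a) (hb1 : b * a * b = b) (hb2 : Rr b = Rr p) (hb3 : Kr b = Rr q) :
    ((IsUnit (1 + b * δa) ∧ Rr (a + δa) = Kr q ∧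
        (a + δa) * (b * Ring.inverse (1 + δa * b)) * (a + δa) = a + δa ∧
        (b * Ring.inverse (1 + δa * b)) * (a + δa) * (b * Ring.inverse (1 + δa * b))
          = b * Ring.inverse (1 + δa * b) ∧
        Rr (b * Ring.inverse (1 + δa * b)) = Rr p ∧
        Kr (b * Ring.inverse (1 + δa * b)) = Rr q) ↔
      (Rr (a + δa) ∩ Rr q = {0} ∧ Kr (a + δa) ∩ Rr p = {0} ∧
        (fun y => (a + δa) * y) '' Rr p = Kr q)) := by
  -- basic consequences of the hypotheses on b
  have hpb : p * b = b := by
    obtain ⟨t, ht⟩ : b ∈ Rr p := hb2 ▸ ⟨1, (mul_one b).symm⟩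
    rw [ht, ← mul_assoc, hp]
  have hbap : b * a * p = p := by
    obtain ⟨s, hs⟩ : p ∈ Rr b := hb2.symm ▸ ⟨1, (mul_one p).symm⟩
    rw [hs, ← mul_assoc, hb1]
  have hbq : b * q = 0 := by
    have : q ∈ Kr b := hb3.symm ▸ (⟨1, (mul_one q).symm⟩ : q ∈ Rr q)
    exact this
  have h1ab : ∃ s, (1 : A) - a * b = q * s := by
    have : (1 : A) - a * b ∈ Kr b := by
      show b * (1 - a * b) = 0
      rw [mul_sub, mul_one, ← mul_assoc, hb1, sub_self]
    rw [hb3] at this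
    exact this
  constructor
  · rintro ⟨hu, hR, hw0, hw1, hw2, hw3⟩
    set w := b * Ring.inverse (1 + δa * b) with hwdef
    refine ⟨?_, ?_, ?_⟩
    · ext x
      simp only [Set.mem_inter_iff, Set.mem_singleton_iff]
      constructor
      · rintro ⟨hx1, hx2⟩
        rw [hR] at hx1
        have hq0 : q * x = 0 := hx1
        have hqx : q * x = x := (mem_Rr_idem hq).mp hx2
        rw [← hqx, hq0]
      · rintro rfl
        exact ⟨⟨0, (mul_zero _).symm⟩, ⟨0, (mul_zero _).symm⟩⟩
    · ext x
      simp only [Set.mem_inter_iff, Set.mem_singleton_iff]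
      constructor
      · rintro ⟨hx1, hx2⟩
        rw [← hw2] at hx2
        obtain ⟨z, rfl⟩ := hx2
        have hx1' : (a + δa) * (w * z) = 0 := hx1
        have key : w * ((a + δa) * (w * z)) = w * z := by
          rw [← mul_assoc, ← mul_assoc, hw1]
        rw [← key, hx1', mul_zero]
      · rintro rfl
        exact ⟨mul_zero _, ⟨0, (mul_zero _).symm⟩⟩
    · ext y
      constructor
      · rintro ⟨x, hx, rfl⟩
        have : (a + δa) * x ∈ Rr (a + δa) := ⟨x, rfl⟩
        rw [hR] at this
        exact this
      · intro hy
        rw [← hR] at hy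
        obtain ⟨z, rfl⟩ := hy
        refine ⟨w * ((a + δa) * z), hw2 ▸ ⟨(a + δa) * z, rfl⟩, ?_⟩
        show (a + δa) * (w * ((a + δa) * z)) = (a + δa) * z
        rw [← mul_assoc, ← mul_assoc, hw0]
  · rintro ⟨h1, h2, h3⟩
    have hL : ∀ x : A, (a + δa) * x = 0 → p * x = x → x = 0 := by
      intro x hx hpx
      have : x ∈ Kr (a + δa) ∩ Rr p := ⟨hx, (mem_Rr_idem hp).mpr hpx⟩
      rw [h2] at this
      exact this
    have hL1 : ∀ x : A, x ∈ Rr (a + δa) → q * x = x → x = 0 := by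
      intro x hx hqx
      have : x ∈ Rr (a + δa) ∩ Rr q := ⟨hx, (mem_Rr_idem hq).mpr hqx⟩
      rw [h1] at this
      exact this
    have hqt : ∀ x : A, q * ((a + δa) * x) = 0 := by
      intro x
      have hmem : (1 - q) * ((a + δa) * x) ∈ Kr q := by
        show q * ((1 - q) * ((a + δa) * x)) = 0
        rw [← mul_assoc, mul_sub, mul_one, hq, sub_self, zero_mul]
      rw [← h3] at hmem
      simp only [Set.mem_image] at hmem
      obtain ⟨y, hy, hyy⟩ := hmem
      apply hL1
      · refine ⟨x - y, ?_⟩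
        rw [mul_sub, hyy]
        noncomm_ring
      · rw [← mul_assoc, hq]
    have hqt1 : q * (a + δa) = 0 := by
      have := hqt 1
      rwa [mul_one] at this
    have hRt : Rr (a + δa) = Kr q := by
      ext y
      constructor
      · rintro ⟨x, rfl⟩
        exact hqt x
      · intro hy
        rw [← h3] at hy
        simp only [Set.mem_image] at hy
        obtain ⟨z, hz, hzz⟩ := hy
        exact ⟨z, hzz.symm⟩
    -- construct c, the (p,q,l)-inverse of a + δa
    have h1q : (1 : A) - q ∈ Kr q := by
      show q * (1 - q) = 0
      rw [mul_sub, mul_one, hq, sub_self]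
    rw [← h3] at h1q
    simp only [Set.mem_image] at h1q
    obtain ⟨c, hcp', hc⟩ := h1q
    have hpc : p * c = c := (mem_Rr_idem hp).mp hcp'
    have hcq : c * q = 0 := by
      apply hL
      · rw [← mul_assoc, hc, sub_mul, one_mul, hq, sub_self]
      · rw [← mul_assoc, hpc]
    have hctp : ∀ y : A, p * y = y → c * ((a + δa) * y) = y := by
      intro y hy
      have e1 : (a + δa) * (y - c * ((a + δa) * y)) = 0 := by
        rw [mul_sub, ← mul_assoc (a + δa) c, hc, sub_mul, one_mul, sub_sub_cancel]
        exact hqt y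
      have e2 : p * (y - c * ((a + δa) * y)) = y - c * ((a + δa) * y) := by
        rw [mul_sub, ← mul_assoc p c, hpc, hy]
      have := hL _ e1 e2
      exact (sub_eq_zero.mp this).symm
    have hcac : c * ((a + δa) * c) = c := hctp c hpc
    have hbac : b * a * c = c := by
      conv_lhs => rw [← hpc, ← mul_assoc, hbap]
      exact hpc
    have hctb : c * ((a + δa) * b) = b := hctp b hpb
    have hcab : c * (a * b) = c := by
      obtain ⟨s, hs⟩ := h1ab
      have h0 : c * (1 - a * b) = 0 := by
        rw [hs, ← mul_assoc, hcq, zero_mul]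
      rw [mul_sub, mul_one] at h0
      exact (sub_eq_zero.mp h0).symm
    have hbtc : b * ((a + δa) * c) = b := by
      rw [hc, mul_sub, mul_one, hbq, sub_zero]
    have hbdc : b * δa * c = b - c := by
      have expand : b * δa * c = b * ((a + δa) * c) - b * a * c := by noncomm_ring
      rw [expand, hbtc, hbac]
    have hcdb : c * δa * b = b - c := by
      have expand : c * δa * b = c * ((a + δa) * b) - c * (a * b) := by noncomm_ring
      rw [expand, hctb, hcab]
    have hu1 : (1 + b * δa) * (1 - c * δa) = 1 := by
      calc (1 + b * δa) * (1 - c * δa)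
          = 1 + b * δa - c * δa - b * δa * c * δa := by noncomm_ring
        _ = 1 + b * δa - c * δa - (b - c) * δa := by rw [hbdc]
        _ = 1 := by noncomm_ring
    have hu2 : (1 - c * δa) * (1 + b * δa) = 1 := by
      calc (1 - c * δa) * (1 + b * δa)
          = 1 + b * δa - c * δa - c * δa * b * δa := by noncomm_ring
        _ = 1 + b * δa - c * δa - (b - c) * δa := by rw [hcdb]
        _ = 1 := by noncomm_ring
    have hv1 : (1 + δa * b) * (1 - δa * c) = 1 := by
      calc (1 + δa * b) * (1 - δa * c)
          = 1 + δa * b - δa * c - δa * (b * δa * c) := by noncomm_ring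
        _ = 1 + δa * b - δa * c - δa * (b - c) := by rw [hbdc]
        _ = 1 := by noncomm_ring
    have hv2 : (1 - δa * c) * (1 + δa * b) = 1 := by
      calc (1 - δa * c) * (1 + δa * b)
          = 1 + δa * b - δa * c - δa * (c * δa * b) := by noncomm_ring
        _ = 1 + δa * b - δa * c - δa * (b - c) := by rw [hcdb]
        _ = 1 := by noncomm_ring
    have hUnit : IsUnit (1 + b * δa) := ⟨⟨1 + b * δa, 1 - c * δa, hu1, hu2⟩, rfl⟩
    have hinv : Ring.inverse (1 + δa * b) = 1 - δa * c := by
      have : (1 + δa * b) = ((⟨1 + δa * b, 1 - δa * c, hv1, hv2⟩ : Aˣ) : A) := rfl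
      rw [this, Ring.inverse_unit]
      rfl
    have hw : b * Ring.inverse (1 + δa * b) = c := by
      rw [hinv]
      calc b * (1 - δa * c) = b - b * δa * c := by noncomm_ring
        _ = b - (b - c) := by rw [hbdc]
        _ = c := by noncomm_ring
    rw [hw]
    refine ⟨hUnit, hRt, ?_, ?_, ?_, ?_⟩
    · rw [hc, sub_mul, one_mul, hqt1, sub_zero]
    · rw [mul_assoc]
      exact hcac
    · ext y
      constructor
      · rintro ⟨x, rfl⟩
        have : p * (c * x) = c * x := by rw [← mul_assoc, hpc]
        exact ⟨c * x, this.symm⟩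
      · intro hy
        have hpy : p * y = y := (mem_Rr_idem hp).mp hy
        exact ⟨(a + δa) * y, (hctp y hpy).symm⟩
    · ext x
      constructor
      · intro hx
        have hx' : c * x = 0 := hx
        rw [mem_Rr_idem hq]
        have hmem : (1 - q) * x ∈ Kr q := by
          show q * ((1 - q) * x) = 0
          rw [← mul_assoc, mul_sub, mul_one, hq, sub_self, zero_mul]
        rw [← h3] at hmem
        simp only [Set.mem_image] at hmem
        obtain ⟨y, hy, hyy⟩ := hmem
        have hpy : p * y = y := (mem_Rr_idem hp).mp hy
        have hc0 : c * ((1 - q) * x) = 0 := by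
          rw [sub_mul, one_mul, mul_sub, hx', ← mul_assoc, hcq, zero_mul, sub_zero]
        have hy0 : y = 0 := by
          rw [← hctp y hpy, hyy]
          exact hc0
        have h1qx : (1 - q) * x = 0 := by
          rw [← hyy, hy0, mul_zero]
        rw [sub_mul, one_mul] at h1qx
        exact (sub_eq_zero.mp h1qx).symm
      · intro hx
        have hqx : q * x = x := (mem_Rr_idem hq).mp hx
        show c * x = 0
        rw [← hqx, ← mul_assoc, hcq, zero_mul]
end

section
/- Let A be a complex unital Banach algebra, let a, δa ∈ A, let p, q ∈ A be idempotents, and suppose b ∈ A satisfies a·b·a = a, b·a·b = b, R_r(b) = R_r(p) and K_r(b) = R_r(q) (i.e., b = a^{(l)}_{p,q}). Put ā = a + δa. If there exists a real number c ≥ 0 with c·‖1 − a·b‖ < 1 such that dist(x, R_r(a)) ≤ c·‖x‖ for every x ∈ R_r(ā) (i.e., δ(R_r(ā), R_r(a)) < ‖1 − a·b‖⁻¹), then R_r(ā) ∩ R_r(q) = {0}. -/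
theorem stmt7 {A : Type*} [NormedRing A] [NormedAlgebra ℂ A] [CompleteSpace A]
    (a δa p q b : A) (hp : p * p = p) (hq : q * q = q)
    (hb0 : a * b * a = a) (hb1 : b * a * b = b) (hb2 : Rr b = Rr p) (hb3 : Kr b = Rr q)
    (hgap : ∃ c : ℝ, 0 ≤ c ∧ c * ‖1 - a * b‖ < 1 ∧
      ∀ x ∈ Rr (a + δa), Metric.infDist x (Rr a) ≤ c * ‖x‖) :
    Rr (a + δa) ∩ Rr q = {0} := by
  obtain ⟨c, hc0, hc1, hgap⟩ := hgap
  ext x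
  simp only [Set.mem_inter_iff, Set.mem_singleton_iff]
  constructor
  · rintro ⟨hxa, hxq⟩
    -- b * x = 0 since Rr q = Kr b
    have hbx : b * x = 0 := by
      have : x ∈ Kr b := hb3 ▸ hxq
      exact this
    have hx1 : (1 - a * b) * x = x := by
      rw [sub_mul, one_mul, mul_assoc, hbx, mul_zero, sub_zero]
    have key : ∀ y ∈ Rr a, ‖x‖ ≤ ‖1 - a * b‖ * dist x y := by
      rintro y ⟨z, rfl⟩
      have h0 : (1 - a * b) * (a * z) = 0 := by
        rw [sub_mul, one_mul, ← mul_assoc, hb0, sub_self]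
      calc ‖x‖ = ‖(1 - a * b) * (x - a * z)‖ := by rw [mul_sub, hx1, h0, sub_zero]
        _ ≤ ‖1 - a * b‖ * ‖x - a * z‖ := norm_mul_le _ _
        _ = ‖1 - a * b‖ * dist x (a * z) := by rw [dist_eq_norm]
    by_contra hxne
    have hxpos : 0 < ‖x‖ := norm_pos_iff.mpr hxne
    have hne : (Rr a).Nonempty := ⟨0, 0, by simp⟩
    have hNpos : 0 < ‖1 - a * b‖ := by
      rcases (norm_nonneg (1 - a * b)).lt_or_eq with h | h
      · exact h
      · exfalso
        have := key 0 ⟨0, by simp⟩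
        rw [← h] at this
        simp at this
        exact hxne this
    have hd : Metric.infDist x (Rr a) ≤ c * ‖x‖ := hgap x hxa
    have hlt : Metric.infDist x (Rr a) < ‖x‖ / ‖1 - a * b‖ := by
      have : c * ‖x‖ < ‖x‖ / ‖1 - a * b‖ := by
        rw [lt_div_iff₀ hNpos]
        nlinarith
      linarith
    obtain ⟨y, hy, hdy⟩ := (Metric.infDist_lt_iff hne).mp hlt
    have := key y hy
    have : ‖x‖ < ‖1 - a * b‖ * (‖x‖ / ‖1 - a * b‖) := by
      calc ‖x‖ ≤ ‖1 - a * b‖ * dist x y := this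
        _ < ‖1 - a * b‖ * (‖x‖ / ‖1 - a * b‖) := by
            exact mul_lt_mul_of_pos_left hdy hNpos
    rw [mul_div_cancel₀ _ (ne_of_gt hNpos)] at this
    exact lt_irrefl _ this
  · rintro rfl
    exact ⟨⟨0, by simp⟩, ⟨0, by simp⟩⟩
end

section
/- Let A be a complex unital Banach algebra, let a, δa ∈ A, let p, q ∈ A be idempotents, and suppose b ∈ A satisfies a·b·a = a, b·a·b = b, R_r(b) = R_r(p) and K_r(b) = R_r(q) (i.e., b = a^{(l)}_{p,q}). Put ā = a + δa. If there exists a real number c ≥ 0 with c·‖b·a‖ < 1 such that dist(x, K_r(a)) ≤ c·‖x‖ for every x ∈ K_r(ā) (i.e., δ(K_r(ā), K_r(a)) < ‖b·a‖⁻¹), then K_r(ā) ∩ R_r(p) = {0}. -/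
theorem stmt8 {A : Type*} [NormedRing A] [NormedAlgebra ℂ A] [CompleteSpace A]
    (a δa p q b : A) (hp : p * p = p) (hq : q * q = q)
    (hb0 : a * b * a = a) (hb1 : b * a * b = b) (hb2 : Rr b = Rr p) (hb3 : Kr b = Rr q)
    (hgap : ∃ c : ℝ, 0 ≤ c ∧ c * ‖b * a‖ < 1 ∧
      ∀ x ∈ Kr (a + δa), Metric.infDist x (Kr a) ≤ c * ‖x‖) :
    Kr (a + δa) ∩ Rr p = {0} := by
  obtain ⟨c, hc0, hc1, hdist⟩ := hgap
  apply Set.eq_singleton_iff_unique_mem.mpr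
  constructor
  · constructor
    · show (a + δa) * 0 = 0; simp
    · exact ⟨0, by simp⟩
  · rintro x ⟨hxK, hxR⟩
    -- x ∈ Rr b
    rw [← hb2] at hxR
    obtain ⟨z, hz⟩ := hxR
    have hfix : b * a * x = x := by
      rw [hz, ← mul_assoc, hb1]
    -- key inequality: for all k ∈ Kr a, ‖x‖ ≤ ‖b*a‖ * ‖x - k‖
    have key : ∀ k ∈ Kr a, ‖x‖ ≤ ‖b * a‖ * ‖x - k‖ := by
      intro k hk
      have hk' : a * k = 0 := hk
      have : b * a * (x - k) = x := by
        rw [mul_sub, hfix, mul_assoc, hk', mul_zero, sub_zero]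
      calc ‖x‖ = ‖b * a * (x - k)‖ := by rw [this]
        _ ≤ ‖b * a‖ * ‖x - k‖ := norm_mul_le _ _
    by_contra hxne
    have hxpos : 0 < ‖x‖ := norm_pos_iff.mpr hxne
    have hKne : (Kr a).Nonempty := ⟨0, by show a * 0 = 0; simp⟩
    have hbapos : 0 < ‖b * a‖ := by
      rcases (norm_nonneg (b * a)).lt_or_eq with h | h
      · exact h
      · exfalso
        have : b * a = 0 := by rwa [eq_comm, norm_eq_zero] at h
        rw [this, zero_mul] at hfix
        exact hxne hfix.symm
    have hle : ‖x‖ / ‖b * a‖ ≤ Metric.infDist x (Kr a) := by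
      by_contra h
      push_neg at h
      obtain ⟨k, hk, hklt⟩ := (Metric.infDist_lt_iff hKne).mp h
      rw [dist_eq_norm] at hklt
      rw [lt_div_iff₀ hbapos] at hklt
      nlinarith [key k hk]
    have := hle.trans (hdist x hxK)
    rw [div_le_iff₀ hbapos] at this
    have : ‖x‖ ≤ (c * ‖b * a‖) * ‖x‖ := by linarith [this]
    nlinarith
end

section
/- Let A be a complex unital Banach algebra, let a, δa ∈ A, let p, q ∈ A be idempotents, and suppose b ∈ A satisfies b·a·b = b, b·a = p and 1 − a·b = q (i.e., b = a^{(2)}_{p,q}). Put ā = a + δa and assume 1 + b·δa is invertible. The following are equivalent: (1) the element c = b·(1 + δa·b)⁻¹ satisfies c·ā·c = c, c·ā = p and 1 − ā·c = q (i.e., ā^{(2)}_{p,q} exists and equals c); (2) ā·p = (1 − q)·ā; (3) ā·b = (1 − q)·ā·b and b·ā = b·ā·p. -/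
theorem stmt10 {A : Type*} [NormedRing A] [NormedAlgebra ℂ A] [CompleteSpace A]
    (a δa p q b : A) (hp : p * p = p) (hq : q * q = q)
    (hb1 : b * a * b = b) (hb2 : b * a = p) (hb3 : 1 - a * b = q)
    (hu : IsUnit (1 + b * δa)) :
    ((b * Ring.inverse (1 + δa * b) * (a + δa) * (b * Ring.inverse (1 + δa * b))
          = b * Ring.inverse (1 + δa * b) ∧
        b * Ring.inverse (1 + δa * b) * (a + δa) = p ∧
        1 - (a + δa) * (b * Ring.inverse (1 + δa * b)) = q) ↔
      (a + δa) * p = (1 - q) * (a + δa)) ∧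
    ((a + δa) * p = (1 - q) * (a + δa) ↔
      ((a + δa) * b = (1 - q) * ((a + δa) * b) ∧
        b * (a + δa) = b * (a + δa) * p)) := by
  obtain ⟨w, hw1, hw2⟩ : ∃ w, (1 + b * δa) * w = 1 ∧ w * (1 + b * δa) = 1 := by
    obtain ⟨u, hu'⟩ := hu
    exact ⟨↑u⁻¹, by rw [← hu']; exact u.mul_inv, by rw [← hu']; exact u.inv_mul⟩
  have hv1' : (1 + δa * b) * (1 - δa * w * b) = 1 := by
    linear_combination (norm := noncomm_ring) -(δa * hw1 * b)
  have hv2' : (1 - δa * w * b) * (1 + δa * b) = 1 := by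
    linear_combination (norm := noncomm_ring) -(δa * hw2 * b)
  have hvu : IsUnit (1 + δa * b) := ⟨⟨1 + δa * b, 1 - δa * w * b, hv1', hv2'⟩, rfl⟩
  set iv : A := Ring.inverse (1 + δa * b) with hivdef
  have hv1 : (1 + δa * b) * iv = 1 := Ring.mul_inverse_cancel _ hvu
  have hv2 : iv * (1 + δa * b) = 1 := Ring.inverse_mul_cancel _ hvu
  have pb : p * b = b := by linear_combination (norm := noncomm_ring) hb1 - hb2 * b
  have bq : b * q = 0 := by linear_combination (norm := noncomm_ring) -(b * hb3) - hb1
  have qab : q * (a * b) = 0 := by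
    linear_combination (norm := noncomm_ring) -(hb3 * (a * b)) - a * hb1
  have hbiv : b * iv = w * b := by
    linear_combination (norm := noncomm_ring) (w * b) * hv1 - hw2 * (b * iv)
  have hbq : b * iv * q = 0 := by
    linear_combination (norm := noncomm_ring) hbiv * q + w * bq
  have hab' : (a + δa) * b = (1 + δa * b) - q := by
    linear_combination (norm := noncomm_ring) -hb3
  have hD : (a + δa) * (b * iv) = 1 - q * iv := by
    linear_combination (norm := noncomm_ring) hab' * iv + hv1
  have triv1 : b * iv * (a + δa) * (b * iv) = b * iv := by
    linear_combination (norm := noncomm_ring) (b * iv) * hD - hbq * iv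
  have red2 : (b * iv * (a + δa) = p) ↔ (b * δa = b * δa * p) := by
    constructor
    · intro h
      rw [hbiv] at h
      have hC : w * (1 - p) = 1 - p := by
        linear_combination (norm := noncomm_ring) -h + w * hb2 + hw2
      linear_combination (norm := noncomm_ring) hw1 * (1 - p) - (1 + b * δa) * hC
    · intro h
      rw [hbiv]
      have hC : w * (1 - p) = 1 - p := by
        linear_combination (norm := noncomm_ring) hw2 * (1 - p) - w * h
      linear_combination (norm := noncomm_ring) w * hb2 + hw2 - hC
  have red3 : (1 - (a + δa) * (b * iv) = q) ↔ (q * (δa * b) = 0) := by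
    constructor
    · intro h
      have hE : q * iv = q := by linear_combination (norm := noncomm_ring) h + hD
      linear_combination (norm := noncomm_ring) q * hv2 - hE * (1 + δa * b)
    · intro h
      have hE : q * iv = q := by linear_combination (norm := noncomm_ring) q * hv1 - h * iv
      linear_combination (norm := noncomm_ring) -hD + hE
  have redE3a : ((a + δa) * b = (1 - q) * ((a + δa) * b)) ↔ (q * (δa * b) = 0) := by
    constructor
    · intro h; linear_combination (norm := noncomm_ring) h - qab
    · intro h; linear_combination (norm := noncomm_ring) h + qab
  have redE3b : (b * (a + δa) = b * (a + δa) * p) ↔ (b * δa = b * δa * p) := by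
    constructor
    · intro h; linear_combination (norm := noncomm_ring) h - hb2 + hb2 * p + hp
    · intro h; linear_combination (norm := noncomm_ring) h + hb2 - hb2 * p - hp
  have red2' : ((a + δa) * p = (1 - q) * (a + δa)) ↔
      (q * (δa * b) = 0 ∧ b * δa = b * δa * p) := by
    constructor
    · intro h
      constructor
      · linear_combination (norm := noncomm_ring)
          q * h * b - q * (a + δa) * pb - hq * ((a + δa) * b) - qab
      · linear_combination (norm := noncomm_ring)
          -(b * h) + bq * (a + δa) - hb2 + hb2 * p + hp
    · rintro ⟨h3a, h3b⟩
      linear_combination (norm := noncomm_ring)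
        -(a * hb2) - hb3 * a - hb3 * δa - δa * hb2 + hb3 * (δa * (b * a)) + h3a * a
          + (a * b * δa) * hb2 - a * h3b
  constructor
  · constructor
    · rintro ⟨-, h2, h3⟩
      exact red2'.2 ⟨red3.1 h3, red2.1 h2⟩
    · intro h
      obtain ⟨ha, hb'⟩ := red2'.1 h
      exact ⟨triv1, red2.2 hb', red3.2 ha⟩
  · constructor
    · intro h
      obtain ⟨ha, hb'⟩ := red2'.1 h
      exact ⟨redE3a.2 ha, redE3b.2 hb'⟩
    · rintro ⟨ha, hb'⟩
      exact red2'.2 ⟨redE3a.1 ha, redE3b.1 hb'⟩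
end

section
/- Let A be a complex unital Banach algebra, let a, δa ∈ A, let p, q ∈ A be idempotents, and suppose b ∈ A satisfies b·a·b = b, b·a = p and 1 − a·b = q (i.e., b = a^{(2)}_{p,q}). Put ā = a + δa. If 1 + b·δa is invertible and δa = (1 − q)·δa = δa·p, then the element c = b·(1 + δa·b)⁻¹ = (1 + b·δa)⁻¹·b satisfies c·ā·c = c, c·ā = p and 1 − ā·c = q; that is, ā^{(2)}_{p,q} exists and equals c. -/
theorem stmt11 {A : Type*} [NormedRing A] [NormedAlgebra ℂ A] [CompleteSpace A]
    (a δa p q b : A) (hp : p * p = p) (hq : q * q = q)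
    (hb1 : b * a * b = b) (hb2 : b * a = p) (hb3 : 1 - a * b = q)
    (hu : IsUnit (1 + b * δa))
    (hδ1 : δa = (1 - q) * δa) (hδ2 : δa = δa * p) :
    b * Ring.inverse (1 + δa * b) = Ring.inverse (1 + b * δa) * b ∧
    b * Ring.inverse (1 + δa * b) * (a + δa) * (b * Ring.inverse (1 + δa * b))
      = b * Ring.inverse (1 + δa * b) ∧
    b * Ring.inverse (1 + δa * b) * (a + δa) = p ∧
    1 - (a + δa) * (b * Ring.inverse (1 + δa * b)) = q := by
  set u : A := 1 + b * δa with hu_def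
  set v : A := 1 + δa * b with hv_def
  set w : A := ↑hu.unit⁻¹ with hw_def
  have hwu : w * u = 1 := hu.val_inv_mul
  have huw : u * w = 1 := hu.mul_val_inv
  -- explicit inverse of v
  have h1 : v * (1 - δa * w * b) = 1 := by
    have : v * (1 - δa * w * b) = 1 + δa * b - δa * (u * w) * b := by
      noncomm_ring [hu_def, hv_def]
    rw [this, huw]; noncomm_ring
  have h2 : (1 - δa * w * b) * v = 1 := by
    have : (1 - δa * w * b) * v = 1 + δa * b - δa * (w * u) * b := by
      noncomm_ring [hu_def, hv_def]
    rw [this, hwu]; noncomm_ring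
  have hv : IsUnit v := ⟨⟨v, 1 - δa * w * b, h1, h2⟩, rfl⟩
  have hRu : Ring.inverse u * u = 1 := Ring.inverse_mul_cancel u hu
  have huR : u * Ring.inverse u = 1 := Ring.mul_inverse_cancel u hu
  have hRv : Ring.inverse v * v = 1 := Ring.inverse_mul_cancel v hv
  have hvR : v * Ring.inverse v = 1 := Ring.mul_inverse_cancel v hv
  have hkey : b * v = u * b := by noncomm_ring [hu_def, hv_def]
  have hcomm : b * Ring.inverse v = Ring.inverse u * b := by
    calc b * Ring.inverse v = Ring.inverse u * (u * b) * Ring.inverse v := by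
          rw [← mul_assoc, hRu, one_mul]
      _ = Ring.inverse u * (b * v) * Ring.inverse v := by rw [hkey]
      _ = Ring.inverse u * b * (v * Ring.inverse v) := by noncomm_ring
      _ = Ring.inverse u * b := by rw [hvR, mul_one]
  have hpb : p * b = b := by rw [← hb2, hb1]
  have hbδp : b * δa = b * δa * p := by
    conv_lhs => rw [hδ2]
    rw [mul_assoc]
  have hup : u * p = p + b * δa := by
    rw [hu_def, add_mul, one_mul, mul_assoc, ← hδ2]
  have hpu : p * u = p + b * δa := by
    rw [hu_def, mul_add, mul_one, ← mul_assoc, hpb]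
  have hpRu : p * Ring.inverse u = Ring.inverse u * p := by
    calc p * Ring.inverse u = (Ring.inverse u * u) * p * Ring.inverse u := by
          rw [hRu, one_mul]
      _ = Ring.inverse u * (u * p) * Ring.inverse u := by noncomm_ring
      _ = Ring.inverse u * (p * u) * Ring.inverse u := by rw [hup, hpu]
      _ = Ring.inverse u * p * (u * Ring.inverse u) := by noncomm_ring
      _ = Ring.inverse u * p := by rw [huR, mul_one]
  have hca : b * Ring.inverse v * (a + δa) = p := by
    rw [hcomm]
    have : Ring.inverse u * b * (a + δa) = Ring.inverse u * (p + b * δa) := by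
      rw [mul_assoc, mul_add, hb2]
    rw [this, ← hup, ← mul_assoc, hRu, one_mul]
  refine ⟨hcomm, ?_, hca, ?_⟩
  · rw [hca, hcomm, ← mul_assoc, hpRu, mul_assoc, hpb]
  · have hab : a * b = 1 - q := by rw [← hb3]; noncomm_ring
    have hδab : δa = a * b * δa := by
      nth_rewrite 1 [hδ1]; rw [hab]
    have hnum : (a + δa) * b = (1 - q) * v := by
      rw [hv_def, ← hab]
      have : a * b * (1 + δa * b) = a * b + (a * b * δa) * b := by noncomm_ring
      rw [this, ← hδab]; noncomm_ring
    have : (a + δa) * (b * Ring.inverse v) = (1 - q) * (v * Ring.inverse v) := by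
      rw [← mul_assoc, hnum]; noncomm_ring
    rw [this, hvR, mul_one]; noncomm_ring
end

section
/- Let A be a complex unital Banach algebra, let a ∈ A and let p ∈ A be idempotent with R_r(p) = R_r(a). Let c ∈ A be such that R_r(c) is a closed subset of A, and suppose there exists a real number t ≥ 0 with t·(1 + ‖p‖) < 1 such that dist(x, R_r(a)) ≤ t·‖x‖ for every x ∈ R_r(c) and dist(y, R_r(c)) ≤ t·‖y‖ for every y ∈ R_r(a) (i.e., the gap δ̂(R_r(c), R_r(a)) < 1/(1 + ‖p‖)). Then every element of A can be written as a sum of an element of R_r(c) and an element of K_r(p), and R_r(c) ∩ K_r(p) = {0}. -/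
/-! Since `p` fixes `R_r(a)`, the map `u ↦ u - p u` is `(1 + ‖p‖)`-Lipschitz and vanishes on
`R_r(a)`; on `R_r(c) ∩ K_r(p)` it is the identity, so there `‖u‖ ≤ (1 + ‖p‖) t ‖u‖`, forcing
`u = 0`.

For the decomposition it suffices that `u ↦ p u` maps `R_r(c)` onto `R_r(a) = R_r(p)`. Every
`y ∈ R_r(p)` lies within `t' ‖y‖` of some `w ∈ R_r(c)` (any `t' > t`), and the error
`y - p w = p (y - w)` lies again in `R_r(p)` with norm at most `‖p‖ t' ‖y‖`, a contraction once
`‖p‖ t' < 1`. Iterating and summing the resulting geometric series in the closed subgroup `R_r(c)`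
of the complete space `A` produces an exact preimage. -/

open Metric Filter Topology

theorem AddMonoidHom.exists_mem_eq_of_approx {E F : Type*} [NormedAddCommGroup E]
    [CompleteSpace E] [NormedAddCommGroup F] (f : E →+ F) (hf : Continuous f)
    (M : AddSubgroup E) (hM : IsClosed (M : Set E)) (S : Set F) {q C : ℝ}
    (hq₀ : 0 ≤ q) (hq₁ : q < 1) (hC : 0 ≤ C)
    (happrox : ∀ y ∈ S, ∃ u ∈ M, ‖u‖ ≤ C * ‖y‖ ∧ y - f u ∈ S ∧ ‖y - f u‖ ≤ q * ‖y‖) :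
    ∀ y ∈ S, ∃ u ∈ M, f u = y := by
  choose! g hgM hgC hgS hgq using happrox
  intro y hy
  set Y : ℕ → F := fun n => (fun w => w - f (g w))^[n] y
  have hY_succ (n : ℕ) : Y (n + 1) = Y n - f (g (Y n)) :=
    Function.iterate_succ_apply' _ _ _
  have hYS (n : ℕ) : Y n ∈ S ∧ ‖Y n‖ ≤ q ^ n * ‖y‖ := by
    induction n with
    | zero => simpa [Y] using hy
    | succ n ih =>
      rw [hY_succ]
      refine ⟨hgS _ ih.1, ?_⟩
      calc ‖Y n - f (g (Y n))‖ ≤ q * ‖Y n‖ := hgq _ ih.1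
        _ ≤ q * (q ^ n * ‖y‖) := by gcongr; exact ih.2
        _ = q ^ (n + 1) * ‖y‖ := by ring
  have hY_lim : Tendsto Y atTop (𝓝 0) := by
    refine squeeze_zero_norm (fun n => (hYS n).2) ?_
    simpa using (tendsto_pow_atTop_nhds_zero_of_lt_one hq₀ hq₁).mul_const ‖y‖
  have hsum : Summable (fun n => g (Y n)) := by
    refine .of_norm_bounded ((summable_geometric_of_lt_one hq₀ hq₁).mul_left (C * ‖y‖))
      fun n => ?_
    calc ‖g (Y n)‖ ≤ C * ‖Y n‖ := hgC _ (hYS n).1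
      _ ≤ C * (q ^ n * ‖y‖) := by gcongr; exact (hYS n).2
      _ = C * ‖y‖ * q ^ n := by ring
  have hpartial := hsum.hasSum.tendsto_sum_nat
  refine ⟨∑' n, g (Y n), hM.mem_of_tendsto hpartial
    (.of_forall fun n => sum_mem fun i _ => hgM _ (hYS i).1), ?_⟩
  have hf_partial (n : ℕ) : f (∑ i ∈ Finset.range n, g (Y i)) = y - Y n := by
    simp only [map_sum, fun i => show f (g (Y i)) = Y i - Y (i + 1) by rw [hY_succ]; abel]
    exact Finset.sum_range_sub' Y n
  refine tendsto_nhds_unique ((hf.tendsto _).comp hpartial) ?_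
  simpa [Function.comp_def, hf_partial] using tendsto_const_nhds.sub hY_lim

theorem exists_mem_norm_sub_le_of_infDist_le {E : Type*} [SeminormedAddCommGroup E]
    {S : Set E} (h0 : (0 : E) ∈ S) {y : E} {t t' : ℝ} (hy : infDist y S ≤ t * ‖y‖)
    (htt' : t < t') : ∃ w ∈ S, ‖y - w‖ ≤ t' * ‖y‖ := by
  rcases eq_or_ne ‖y‖ 0 with hy0 | hy0
  · exact ⟨0, h0, by simp [hy0]⟩
  have hlt : infDist y S < t' * ‖y‖ :=
    hy.trans_lt (mul_lt_mul_of_pos_right htt' ((norm_nonneg y).lt_of_ne' hy0))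
  obtain ⟨w, hw, hdist⟩ := (infDist_lt_iff ⟨0, h0⟩).1 hlt
  exact ⟨w, hw, (dist_eq_norm y w ▸ hdist).le⟩

section Ring

variable {A : Type*} [Ring A]

theorem Rr_eq_range (c : A) : Rr c = ((AddMonoidHom.mulLeft c).range : Set A) := by
  ext y
  exact ⟨fun ⟨x, hx⟩ => ⟨x, hx.symm⟩, fun ⟨x, hx⟩ => ⟨x, hx.symm⟩⟩

theorem zero_mem_Rr (c : A) : (0 : A) ∈ Rr c := ⟨0, (mul_zero c).symm⟩

theorem mul_mem_Rr (c x : A) : c * x ∈ Rr c := ⟨x, rfl⟩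

theorem IsIdempotentElem.mul_eq_self_of_mem_Rr {p y : A} (hp : IsIdempotentElem p)
    (hy : y ∈ Rr p) : p * y = y := by
  obtain ⟨x, rfl⟩ := hy
  rw [← mul_assoc, hp.eq]

end Ring

section NormedRing

variable {A : Type*} [NormedRing A]

theorem norm_sub_mul_self_le_infDist {p : A} {S : Set A} (hS : S.Nonempty)
    (hfix : ∀ w ∈ S, p * w = w) (u : A) : ‖u - p * u‖ ≤ (1 + ‖p‖) * infDist u S := by
  rw [← div_le_iff₀' (by positivity), le_infDist hS]
  intro w hw
  rw [div_le_iff₀' (by positivity), dist_eq_norm]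
  calc ‖u - p * u‖ = ‖(u - w) - p * (u - w)‖ := by rw [mul_sub, hfix w hw]; abel_nf
    _ ≤ ‖u - w‖ + ‖p‖ * ‖u - w‖ := (norm_sub_le _ _).trans (by gcongr; exact norm_mul_le _ _)
    _ = (1 + ‖p‖) * ‖u - w‖ := by ring

theorem inter_Kr_eq_zero_of_infDist_le {p : A} {S M : Set A} {t : ℝ} (hS : S.Nonempty)
    (hfix : ∀ w ∈ S, p * w = w) (h0 : (0 : A) ∈ M) (ht : t * (1 + ‖p‖) < 1)
    (hM : ∀ x ∈ M, infDist x S ≤ t * ‖x‖) : M ∩ Kr p = {0} := by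
  refine Set.eq_singleton_iff_unique_mem.2 ⟨⟨h0, mul_zero p⟩, fun x ⟨hxM, hxK⟩ => ?_⟩
  have hpx : p * x = 0 := hxK
  have : ‖x‖ ≤ t * (1 + ‖p‖) * ‖x‖ :=
    calc ‖x‖ = ‖x - p * x‖ := by rw [hpx, sub_zero]
      _ ≤ (1 + ‖p‖) * infDist x S := norm_sub_mul_self_le_infDist hS hfix x
      _ ≤ (1 + ‖p‖) * (t * ‖x‖) := by gcongr; exact hM x hxM
      _ = t * (1 + ‖p‖) * ‖x‖ := by ring
  exact norm_le_zero_iff.1 (by nlinarith [norm_nonneg x])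

theorem IsIdempotentElem.exists_mem_mul_eq_of_infDist_le [CompleteSpace A] {p : A}
    (hp : IsIdempotentElem p) (M : AddSubgroup A) (hM : IsClosed (M : Set A)) {t : ℝ}
    (ht₀ : 0 ≤ t) (ht : ‖p‖ * t < 1) (hRM : ∀ y ∈ Rr p, infDist y M ≤ t * ‖y‖) :
    ∀ y ∈ Rr p, ∃ u ∈ M, p * u = y := by
  obtain ⟨t', htt', ht'⟩ : ∃ t', t < t' ∧ ‖p‖ * t' < 1 := by
    have hgap : 0 < 1 - ‖p‖ * t := by linarith
    refine ⟨t + (1 - ‖p‖ * t) / (‖p‖ + 1), lt_add_of_pos_right _ (by positivity), ?_⟩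
    field_simp
    nlinarith [norm_nonneg p]
  refine (AddMonoidHom.mulLeft p).exists_mem_eq_of_approx (continuous_const_mul p) M hM (Rr p)
    (mul_nonneg (norm_nonneg p) (ht₀.trans htt'.le)) ht' (C := 1 + t') (by linarith)
    fun y hy => ?_
  obtain ⟨w, hwM, hyw⟩ := exists_mem_norm_sub_le_of_infDist_le M.zero_mem (hRM y hy) htt'
  have hpw : y - p * w = p * (y - w) := by rw [mul_sub, hp.mul_eq_self_of_mem_Rr hy]
  refine ⟨w, hwM, ?_, ?_, ?_⟩
  · calc ‖w‖ ≤ ‖y‖ + ‖y - w‖ := norm_le_insert y w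
      _ ≤ (1 + t') * ‖y‖ := by linarith
  · exact hpw ▸ mul_mem_Rr p _
  · calc ‖y - p * w‖ ≤ ‖p‖ * ‖y - w‖ := hpw ▸ norm_mul_le _ _
      _ ≤ ‖p‖ * t' * ‖y‖ := by rw [mul_assoc]; gcongr

end NormedRing

theorem stmt12_general {A : Type*} [NormedRing A] [CompleteSpace A]
    (a p c : A) (hp : p * p = p) (hpa : Rr p = Rr a)
    (hclosed : IsClosed (Rr c))
    (hgap : ∃ t : ℝ, 0 ≤ t ∧ t * (1 + ‖p‖) < 1 ∧
      (∀ x ∈ Rr c, Metric.infDist x (Rr a) ≤ t * ‖x‖) ∧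
      (∀ y ∈ Rr a, Metric.infDist y (Rr c) ≤ t * ‖y‖)) :
    (∀ z : A, ∃ u ∈ Rr c, ∃ v ∈ Kr p, z = u + v) ∧ Rr c ∩ Kr p = {0} := by
  obtain ⟨t, ht₀, ht, hca, hac⟩ := hgap
  have hp' : IsIdempotentElem p := hp
  have hfix (w : A) (hw : w ∈ Rr a) : p * w = w := hp'.mul_eq_self_of_mem_Rr (hpa ▸ hw)
  refine ⟨fun z => ?_,
    inter_Kr_eq_zero_of_infDist_le ⟨0, zero_mem_Rr a⟩ hfix (zero_mem_Rr c) ht hca⟩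
  rw [Rr_eq_range c] at hclosed hac ⊢
  obtain ⟨u, hu, hpu⟩ := hp'.exists_mem_mul_eq_of_infDist_le _ hclosed ht₀
    (by nlinarith [norm_nonneg p]) (fun y hy => hac y (hpa ▸ hy)) (p * z) (mul_mem_Rr p z)
  refine ⟨u, hu, z - u, ?_, (add_sub_cancel u z).symm⟩
  change p * (z - u) = 0
  rw [mul_sub, hpu, sub_self]

theorem stmt12 {A : Type*} [NormedRing A] [NormedAlgebra ℂ A] [CompleteSpace A]
    (a p c : A) (hp : p * p = p) (hpa : Rr p = Rr a)
    (hclosed : IsClosed (Rr c))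
    (hgap : ∃ t : ℝ, 0 ≤ t ∧ t * (1 + ‖p‖) < 1 ∧
      (∀ x ∈ Rr c, Metric.infDist x (Rr a) ≤ t * ‖x‖) ∧
      (∀ y ∈ Rr a, Metric.infDist y (Rr c) ≤ t * ‖y‖)) :
    (∀ z : A, ∃ u ∈ Rr c, ∃ v ∈ Kr p, z = u + v) ∧ Rr c ∩ Kr p = {0} :=
  stmt12_general a p c hp hpa hclosed hgap
end

section
/- Let A be a complex unital Banach algebra, let a ∈ A, let p, q ∈ A be idempotents, and suppose b ∈ A satisfies b·a·b = b, R_r(b) = R_r(p) and K_r(b) = R_r(q) (i.e., b = a^{(2,l)}_{p,q}). Set κ = ‖a‖·‖b‖. Let p′ ∈ A be an idempotent with ‖p − p′‖ < 1/(1 + κ). Then: (1) for every x ∈ R_r(a·p′) one has dist(x, R_r(a·p)) ≤ [κ·‖p − p′‖ / (1 − (1 + κ)·‖p − p′‖)]·‖x‖, and for every y ∈ R_r(a·p) one has dist(y, R_r(a·p′)) ≤ [κ·‖p − p′‖ / (1 − (1 + κ)·‖p − p′‖)]·‖y‖ (i.e., δ̂(a·R_r(p), a·R_r(p′)) ≤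 κ·‖p − p′‖/(1 − (1 + κ)·‖p − p′‖)); (2) R_r(a·p′) is a closed subset of A and K_r(a) ∩ R_r(p′) = {0}. -/
theorem stmt14 {A : Type*} [NormedRing A] [NormedAlgebra ℂ A] [CompleteSpace A]
    (a p q b p' : A) (hp : p * p = p) (hq : q * q = q) (hp' : p' * p' = p')
    (hb1 : b * a * b = b) (hb2 : Rr b = Rr p) (hb3 : Kr b = Rr q)
    (hpp' : ‖p - p'‖ < 1 / (1 + ‖a‖ * ‖b‖)) :
    (∀ x ∈ Rr (a * p'), Metric.infDist x (Rr (a * p)) ≤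
        (‖a‖ * ‖b‖ * ‖p - p'‖ / (1 - (1 + ‖a‖ * ‖b‖) * ‖p - p'‖)) * ‖x‖) ∧
    (∀ y ∈ Rr (a * p), Metric.infDist y (Rr (a * p')) ≤
        (‖a‖ * ‖b‖ * ‖p - p'‖ / (1 - (1 + ‖a‖ * ‖b‖) * ‖p - p'‖)) * ‖y‖) ∧
    IsClosed (Rr (a * p')) ∧ Kr a ∩ Rr p' = {0} := by
  have hκ : (0:ℝ) ≤ ‖a‖ * ‖b‖ := mul_nonneg (norm_nonneg a) (norm_nonneg b)
  have hθ : (0:ℝ) ≤ ‖p - p'‖ := norm_nonneg _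
  have hpos : (0:ℝ) < 1 + ‖a‖ * ‖b‖ := by linarith
  have hθ1 : ‖p - p'‖ * (1 + ‖a‖ * ‖b‖) < 1 := (lt_div_iff₀ hpos).mp hpp'
  set D : ℝ := 1 - (1 + ‖a‖ * ‖b‖) * ‖p - p'‖ with hDdef
  have hD : 0 < D := by rw [hDdef]; nlinarith
  have hD1 : D ≤ 1 := by rw [hDdef]; nlinarith
  -- b*a*p = p
  have hpmem : p ∈ Rr b := by rw [hb2]; exact ⟨p, hp.symm⟩
  obtain ⟨t, ht⟩ := hpmem
  have hbap : b * a * p = p := by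
    rw [ht, ← mul_assoc, hb1]
  -- key inequality
  have key2 : ∀ v : A, p' * v = v → D * ‖v‖ ≤ ‖b‖ * ‖a * v‖ := by
    intro v hv
    have hid : v = b * (a * v) - b * (a * ((p' - p) * v)) + (p' - p) * v := by
      have h1 : p * v = v - (p' - p) * v := by rw [sub_mul, hv]; noncomm_ring
      have h2 : b * (a * v) - b * (a * ((p' - p) * v)) = b * a * (p * v) := by
        rw [h1]; noncomm_ring
      rw [h2, ← mul_assoc, hbap, h1]; noncomm_ring
    have hn1 : ‖v‖ ≤ ‖b * (a * v)‖ + ‖b * (a * ((p' - p) * v))‖ + ‖(p' - p) * v‖ := by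
      calc ‖v‖ = ‖b * (a * v) - b * (a * ((p' - p) * v)) + (p' - p) * v‖ := by rw [← hid]
      _ ≤ ‖b * (a * v) - b * (a * ((p' - p) * v))‖ + ‖(p' - p) * v‖ := norm_add_le _ _
      _ ≤ ‖b * (a * v)‖ + ‖b * (a * ((p' - p) * v))‖ + ‖(p' - p) * v‖ := by
          linarith [norm_sub_le (b * (a * v)) (b * (a * ((p' - p) * v)))]
    have e1 : ‖b * (a * v)‖ ≤ ‖b‖ * ‖a * v‖ := norm_mul_le _ _
    have e2 : ‖(p' - p) * v‖ ≤ ‖p - p'‖ * ‖v‖ := by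
      calc ‖(p' - p) * v‖ ≤ ‖p' - p‖ * ‖v‖ := norm_mul_le _ _
      _ = ‖p - p'‖ * ‖v‖ := by rw [norm_sub_rev]
    have e3 : ‖b * (a * ((p' - p) * v))‖ ≤ ‖b‖ * (‖a‖ * (‖p - p'‖ * ‖v‖)) := by
      calc ‖b * (a * ((p' - p) * v))‖ ≤ ‖b‖ * ‖a * ((p' - p) * v)‖ := norm_mul_le _ _
      _ ≤ ‖b‖ * (‖a‖ * ‖(p' - p) * v‖) :=
          mul_le_mul_of_nonneg_left (norm_mul_le _ _) (norm_nonneg b)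
      _ ≤ ‖b‖ * (‖a‖ * (‖p - p'‖ * ‖v‖)) := by
          apply mul_le_mul_of_nonneg_left _ (norm_nonneg b)
          exact mul_le_mul_of_nonneg_left e2 (norm_nonneg a)
    rw [hDdef]; nlinarith
  set C : ℝ := ‖b‖ / D with hCdef
  have hC : (0:ℝ) ≤ C := div_nonneg (norm_nonneg b) hD.le
  have key3 : ∀ v : A, p' * v = v → ‖v‖ ≤ C * ‖a * v‖ := by
    intro v hv
    have h := key2 v hv
    rw [hCdef, div_mul_eq_mul_div, le_div_iff₀ hD]
    nlinarith
  refine ⟨?_, ?_, ?_, ?_⟩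
  · -- δ(aR(p'), aR(p))
    rintro x ⟨u, hu⟩
    set v : A := p' * u with hvdef
    have hv : p' * v = v := by rw [hvdef, ← mul_assoc, hp']
    have hxv : x = a * v := by rw [hu, hvdef, mul_assoc]
    have hmem : (a * p) * v ∈ Rr (a * p) := ⟨v, rfl⟩
    have h1 : Metric.infDist x (Rr (a * p)) ≤ ‖a‖ * (‖p - p'‖ * ‖v‖) := by
      calc Metric.infDist x (Rr (a * p)) ≤ dist x ((a * p) * v) :=
            Metric.infDist_le_dist_of_mem hmem
      _ = ‖a * ((p' - p) * v)‖ := by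
          rw [dist_eq_norm, hxv]
          congr 1
          have : a * v = a * (p' * v) := by rw [hv]
          rw [this]; noncomm_ring
      _ ≤ ‖a‖ * ‖(p' - p) * v‖ := norm_mul_le _ _
      _ ≤ ‖a‖ * (‖p - p'‖ * ‖v‖) := by
          apply mul_le_mul_of_nonneg_left _ (norm_nonneg a)
          calc ‖(p' - p) * v‖ ≤ ‖p' - p‖ * ‖v‖ := norm_mul_le _ _
          _ = ‖p - p'‖ * ‖v‖ := by rw [norm_sub_rev]
    have h2 := key2 v hv
    rw [← hxv] at h2
    rw [div_mul_eq_mul_div, le_div_iff₀ hD]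
    nlinarith [Metric.infDist_nonneg (s := Rr (a * p)) (x := x), norm_nonneg a, norm_nonneg v,
      mul_le_mul_of_nonneg_right h1 hD.le,
      mul_le_mul_of_nonneg_left h2 (mul_nonneg (norm_nonneg a) hθ)]
  · -- δ(aR(p), aR(p'))
    rintro y ⟨w, hw⟩
    set v : A := p * w with hvdef
    have hv : p * v = v := by rw [hvdef, ← mul_assoc, hp]
    have hyv : y = a * v := by rw [hw, hvdef, mul_assoc]
    have hbv : ‖v‖ ≤ ‖b‖ * ‖y‖ := by
      have : v = b * (a * v) := by
        conv_lhs => rw [← hv, ← hbap]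
        rw [mul_assoc, mul_assoc, hv]
      calc ‖v‖ = ‖b * (a * v)‖ := by rw [← this]
      _ ≤ ‖b‖ * ‖a * v‖ := norm_mul_le _ _
      _ = ‖b‖ * ‖y‖ := by rw [← hyv]
    have hmem : (a * p') * v ∈ Rr (a * p') := ⟨v, rfl⟩
    have h1 : Metric.infDist y (Rr (a * p')) ≤ ‖a‖ * (‖p - p'‖ * ‖v‖) := by
      calc Metric.infDist y (Rr (a * p')) ≤ dist y ((a * p') * v) :=
            Metric.infDist_le_dist_of_mem hmem
      _ = ‖a * ((p - p') * v)‖ := by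
          rw [dist_eq_norm, hyv]
          congr 1
          have : a * v = a * (p * v) := by rw [hv]
          rw [this]; noncomm_ring
      _ ≤ ‖a‖ * ‖(p - p') * v‖ := norm_mul_le _ _
      _ ≤ ‖a‖ * (‖p - p'‖ * ‖v‖) :=
          mul_le_mul_of_nonneg_left (norm_mul_le _ _) (norm_nonneg a)
    rw [div_mul_eq_mul_div, le_div_iff₀ hD]
    nlinarith [Metric.infDist_nonneg (s := Rr (a * p')) (x := y),
      mul_le_mul_of_nonneg_left hbv (mul_nonneg (norm_nonneg a) hθ), norm_nonneg a]
  · -- closedness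
    apply IsSeqClosed.isClosed
    intro x z hx hlim
    choose u hu using hx
    set v : ℕ → A := fun n => p' * u n with hvdef
    have hv : ∀ n, p' * v n = v n := by
      intro n; rw [hvdef]; simp only; rw [← mul_assoc, hp']
    have hxv : ∀ n, x n = a * v n := by
      intro n; rw [hu n, hvdef]; simp only; rw [mul_assoc]
    have hcx : CauchySeq x := hlim.cauchySeq
    have hcv : CauchySeq v := by
      rw [Metric.cauchySeq_iff] at hcx ⊢
      intro ε hε
      obtain ⟨N, hN⟩ := hcx (ε / (C + 1)) (by positivity)
      refine ⟨N, fun m hm n hn => ?_⟩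
      have h1 : p' * (v m - v n) = v m - v n := by rw [mul_sub, hv, hv]
      have h2 := key3 _ h1
      have h3 : a * (v m - v n) = x m - x n := by rw [mul_sub, ← hxv, ← hxv]
      rw [h3] at h2
      have h4 := hN m hm n hn
      rw [dist_eq_norm] at h4 ⊢
      have h5 : C * ‖x m - x n‖ ≤ C * (ε / (C + 1)) :=
        mul_le_mul_of_nonneg_left h4.le hC
      have h6 : C * (ε / (C + 1)) < ε := by
        rw [mul_div_assoc']
        rw [div_lt_iff₀ (by positivity : (0:ℝ) < C + 1)]
        nlinarith
      linarith
    obtain ⟨w, hw⟩ := cauchySeq_tendsto_of_complete hcv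
    have hwp : p' * w = w := by
      have h1 : Filter.Tendsto (fun n => p' * v n) Filter.atTop (nhds (p' * w)) :=
        hw.const_mul p'
      have h2 : Filter.Tendsto (fun n => p' * v n) Filter.atTop (nhds w) := by
        simpa only [hv] using hw
      exact tendsto_nhds_unique h1 h2
    have haw : Filter.Tendsto x Filter.atTop (nhds (a * w)) := by
      have h1 : Filter.Tendsto (fun n => a * v n) Filter.atTop (nhds (a * w)) :=
        hw.const_mul a
      simpa only [← hxv] using h1
    have hz : z = a * w := tendsto_nhds_unique hlim haw
    exact ⟨w, by rw [hz, mul_assoc, hwp]⟩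
  · -- Kr a ∩ Rr p' = {0}
    apply Set.eq_singleton_iff_unique_mem.mpr
    constructor
    · exact ⟨mul_zero a, ⟨0, (mul_zero p').symm⟩⟩
    · rintro x ⟨hx1, u, hu⟩
      have hv : p' * x = x := by rw [hu, ← mul_assoc, hp']
      have h := key3 x hv
      rw [hx1, norm_zero, mul_zero] at h
      exact norm_eq_zero.mp (le_antisymm h (norm_nonneg x))
end

section
/- Let A be a complex unital Banach algebra, let a ∈ A, let p, q ∈ A be idempotents, and suppose b ∈ A satisfies b·a·b = b, R_r(b) = R_r(p) and K_r(b) = R_r(q) (i.e., b = a^{(2,l)}_{p,q}). Set κ = ‖a‖·‖b‖. Let p′ ∈ A be an idempotent with ‖p − p′‖ < 1/(1 + κ)². Then there exists b′ ∈ A with b′·a·b′ = b′, R_r(b′) = R_r(p′) and K_r(b′) = R_r(q) (i.e., a^{(2,l)}_{p′,q} exists), and it satisfies ‖b′ − b‖ ≤ (1 + κ)·‖p′ − p‖·‖b‖ / (1 − (1 + κ)·‖p′ − p‖) and ‖b′‖ ≤ ‖b‖ / (1 − (1 + κ)·‖p′ − p‖). -/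
set_option maxHeartbeats 1000000 in
theorem stmt15 {A : Type*} [NormedRing A] [NormedAlgebra ℂ A] [CompleteSpace A]
    (a p q b p' : A) (hp : p * p = p) (hq : q * q = q) (hp' : p' * p' = p')
    (hb1 : b * a * b = b) (hb2 : Rr b = Rr p) (hb3 : Kr b = Rr q)
    (hpp' : ‖p - p'‖ < 1 / (1 + ‖a‖ * ‖b‖) ^ 2) :
    ∃ b' : A, b' * a * b' = b' ∧ Rr b' = Rr p' ∧ Kr b' = Rr q ∧
      ‖b' - b‖ ≤ (1 + ‖a‖ * ‖b‖) * ‖p' - p‖ * ‖b‖ / (1 - (1 + ‖a‖ * ‖b‖) * ‖p' - p‖) ∧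
      ‖b'‖ ≤ ‖b‖ / (1 - (1 + ‖a‖ * ‖b‖) * ‖p' - p‖) := by
  have unit_exists : ∀ x : A, ‖x‖ < 1 → ∃ y : A, (1 + x) * y = 1 ∧ y * (1 + x) = 1 := by
    intro x hx
    have hx' : ‖-x‖ < 1 := by rwa [norm_neg]
    refine ⟨((Units.oneSub (-x) hx')⁻¹ : Aˣ), ?_, ?_⟩
    · have h := (Units.oneSub (-x) hx').mul_inv
      rwa [Units.val_oneSub, sub_neg_eq_add] at h
    · have h := (Units.oneSub (-x) hx').inv_mul
      rwa [Units.val_oneSub, sub_neg_eq_add] at h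
  have hK0 : (0:ℝ) ≤ ‖a‖ * ‖b‖ := mul_nonneg (norm_nonneg _) (norm_nonneg _)
  have hea : ‖b * a‖ ≤ ‖a‖ * ‖b‖ := by
    rw [mul_comm ‖a‖]; exact norm_mul_le b a
  have hD : ‖p' - p‖ < 1 / (1 + ‖a‖ * ‖b‖) ^ 2 := by
    rw [norm_sub_rev]; exact hpp'
  have hDK : ‖p' - p‖ * (1 + ‖a‖ * ‖b‖) ^ 2 < 1 :=
    (lt_div_iff₀ (by positivity)).mp hD
  have hN0 : (0:ℝ) ≤ ‖p' - p‖ := norm_nonneg _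
  have hKD1 : (1 + ‖a‖ * ‖b‖) * ‖p' - p‖ < 1 := by nlinarith
  -- basic idempotent facts
  have hbb : b ∈ Rr p := by
    rw [← hb2]; exact ⟨a * b, by rw [← mul_assoc, hb1]⟩
  obtain ⟨x₀, hx₀⟩ := hbb
  have hpb : p * b = b := by rw [hx₀, ← mul_assoc, hp]
  have hpp : p ∈ Rr b := by rw [hb2]; exact ⟨p, hp.symm⟩
  obtain ⟨x₁, hx₁⟩ := hpp
  have hep : b * a * p = p := by
    rw [hx₁, ← mul_assoc, hb1]
  have hba : b * a ∈ Rr p := by rw [← hb2]; exact ⟨a, rfl⟩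
  obtain ⟨x₂, hx₂⟩ := hba
  have hpe : p * (b * a) = b * a := by rw [hx₂, ← mul_assoc, hp]
  have hee : b * a * (b * a) = b * a := by rw [← mul_assoc, hb1]
  -- the unit 1 + E, E = b*a*(p'-p)*(b*a)
  have hE1 : ‖b * a * (p' - p) * (b * a)‖ ≤ ‖b * a‖ * ‖p' - p‖ * ‖b * a‖ := by
    calc ‖b * a * (p' - p) * (b * a)‖ ≤ ‖b * a * (p' - p)‖ * ‖b * a‖ := norm_mul_le _ _
      _ ≤ ‖b * a‖ * ‖p' - p‖ * ‖b * a‖ :=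
          mul_le_mul_of_nonneg_right (norm_mul_le _ _) (norm_nonneg _)
  have hE2 : ‖b * a‖ * ‖p' - p‖ * ‖b * a‖ ≤ (‖a‖ * ‖b‖) * ‖p' - p‖ * (‖a‖ * ‖b‖) := by
    gcongr
  have hwlt : ‖b * a * (p' - p) * (b * a)‖ < 1 := by
    nlinarith [norm_nonneg (b * a)]
  obtain ⟨W, hW1, hW2⟩ := unit_exists _ hwlt
  -- the unit 1 + G, G = b*a*(p'-p) - (p'-p)
  have hvlt : ‖b * a * (p' - p) - (p' - p)‖ < 1 := by
    have h₁ : ‖b * a * (p' - p) - (p' - p)‖ ≤ ‖b * a * (p' - p)‖ + ‖p' - p‖ :=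
      norm_sub_le _ _
    have h₂ : ‖b * a * (p' - p)‖ ≤ ‖b * a‖ * ‖p' - p‖ := norm_mul_le _ _
    nlinarith [norm_nonneg (b * a)]
  obtain ⟨V, hV1, hV2⟩ := unit_exists _ hvlt
  -- commutation of b*a with W
  have hcomE : b * a * (1 + b * a * (p' - p) * (b * a))
      = (1 + b * a * (p' - p) * (b * a)) * (b * a) := by
    rw [mul_add, add_mul, mul_one, one_mul]
    congr 1
    calc b * a * (b * a * (p' - p) * (b * a))
        = b * a * (b * a) * (p' - p) * (b * a) := by
          simp only [← mul_assoc]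
      _ = b * a * (p' - p) * (b * a) := by rw [hee]
      _ = b * a * (p' - p) * (b * a * (b * a)) := by rw [hee]
      _ = b * a * (p' - p) * (b * a) * (b * a) := by simp only [← mul_assoc]
  have hcom : b * a * W = W * (b * a) := by
    have h2 : b * a * W = (W * (1 + b * a * (p' - p) * (b * a))) * (b * a * W) := by
      rw [hW2, one_mul]
    rw [h2, mul_assoc W, ← mul_assoc (1 + b * a * (p' - p) * (b * a)), ← hcomE,
      mul_assoc (b * a), hW1, mul_one]
  -- key absorption identities
  have s1 : b * a * (W * b) = W * b := by
    rw [← mul_assoc, hcom, mul_assoc, hb1]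
  have h4 : b * a * p' = p + b * a * (p' - p) := by
    rw [mul_sub, hep]; abel
  have hmid : b * a * p' * (b * a) = b * a + b * a * (p' - p) * (b * a) := by
    rw [h4, add_mul, hpe]
  have hEB : b * a * (p' * (W * b)) = b := by
    calc b * a * (p' * (W * b))
        = b * a * (p' * (b * a * (W * b))) := by rw [s1]
      _ = b * a * p' * (b * a) * (W * b) := by simp only [← mul_assoc]
      _ = (b * a + b * a * (p' - p) * (b * a)) * (W * b) := by rw [hmid]
      _ = (1 + b * a * (p' - p) * (b * a)) * (W * b) := by
          rw [add_mul, add_mul, one_mul, s1]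
      _ = (1 + b * a * (p' - p) * (b * a)) * W * b := by
          rw [← mul_assoc (1 + b * a * (p' - p) * (b * a)) W b]
      _ = b := by rw [hW1, one_mul]
  have hpB' : p' * (p' * (W * b)) = p' * (W * b) := by
    rw [← mul_assoc, hp']
  -- outer inverse property
  have houter : p' * (W * b) * a * (p' * (W * b)) = p' * (W * b) := by
    have hEBr : b * (a * (p' * (W * b))) = b := by
      rw [← mul_assoc]; exact hEB
    calc p' * (W * b) * a * (p' * (W * b))
        = p' * (W * (b * (a * (p' * (W * b))))) := by simp only [mul_assoc]
      _ = p' * (W * b) := by rw [hEBr]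
  -- range
  have hkey2 : p' * (b * a * p') = p' * (1 + (b * a * (p' - p) - (p' - p))) := by
    rw [h4]
    simp only [mul_add, mul_sub, mul_one, hp']
    abel
  have hkey : (p' * (W * b)) * (a * ((1 + b * a * (p' - p) * (b * a)) * (p' * V))) = p' := by
    calc (p' * (W * b)) * (a * ((1 + b * a * (p' - p) * (b * a)) * (p' * V)))
        = p' * (W * (b * a) * ((1 + b * a * (p' - p) * (b * a)) * (p' * V))) := by
          simp only [mul_assoc]
      _ = p' * (b * a * W * ((1 + b * a * (p' - p) * (b * a)) * (p' * V))) := by rw [hcom]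
      _ = p' * (b * a * (W * (1 + b * a * (p' - p) * (b * a)) * (p' * V))) := by
          simp only [mul_assoc]
      _ = p' * (b * a * (p' * V)) := by rw [hW2, one_mul]
      _ = p' * (b * a * p') * V := by simp only [mul_assoc]
      _ = p' * (1 + (b * a * (p' - p) - (p' - p))) * V := by rw [hkey2]
      _ = p' * ((1 + (b * a * (p' - p) - (p' - p))) * V) := by rw [mul_assoc]
      _ = p' := by rw [hV1, mul_one]
  have hRr : Rr (p' * (W * b)) = Rr p' := by
    ext y
    constructor
    · rintro ⟨x, rfl⟩
      exact ⟨W * b * x, by simp only [mul_assoc]⟩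
    · rintro ⟨x, rfl⟩
      refine ⟨a * ((1 + b * a * (p' - p) * (b * a)) * (p' * V)) * x, ?_⟩
      rw [← mul_assoc, hkey]
  -- kernel
  have hKr : Kr (p' * (W * b)) = Rr q := by
    rw [← hb3]
    ext x
    simp only [Kr, Set.mem_setOf_eq]
    constructor
    · intro h
      rw [← hEB, mul_assoc, h, mul_zero]
    · intro h
      calc p' * (W * b) * x = p' * (W * (b * x)) := by simp only [mul_assoc]
        _ = 0 := by rw [h, mul_zero, mul_zero]
  -- perturbation identity
  have hC : (p' - p) * (p' * (W * b)) = p' * (W * b) - p * (p' * (W * b)) := by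
    rw [sub_mul, hpB']
  have hD2 : b * a * ((p' - p) * (p' * (W * b))) = b - p * (p' * (W * b)) := by
    rw [hC, mul_sub, hEB, ← mul_assoc, hep]
  have hpert : p' * (W * b) - b
      = (p' - p) * (p' * (W * b)) - b * a * ((p' - p) * (p' * (W * b))) := by
    rw [hD2, hC]; abel
  -- norm estimates
  have hCn : ‖(p' - p) * (p' * (W * b))‖ ≤ ‖p' - p‖ * ‖p' * (W * b)‖ := norm_mul_le _ _
  have h5 : ‖p' * (W * b) - b‖ ≤ (1 + ‖a‖ * ‖b‖) * ‖p' - p‖ * ‖p' * (W * b)‖ := by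
    rw [hpert]
    have h₁ := norm_sub_le ((p' - p) * (p' * (W * b)))
      (b * a * ((p' - p) * (p' * (W * b))))
    have h₂ := norm_mul_le (b * a) ((p' - p) * (p' * (W * b)))
    have h₃ := norm_nonneg ((p' - p) * (p' * (W * b)))
    have h₄ := norm_nonneg (p' * (W * b))
    have h₅ := norm_nonneg (b * a)
    nlinarith
  have h6 : ‖p' * (W * b)‖ ≤ ‖b‖ + (1 + ‖a‖ * ‖b‖) * ‖p' - p‖ * ‖p' * (W * b)‖ := by
    have h7 := norm_sub_norm_le (p' * (W * b)) b
    linarith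
  have hpos : (0:ℝ) < 1 - (1 + ‖a‖ * ‖b‖) * ‖p' - p‖ := by linarith
  have hnb' : ‖p' * (W * b)‖ ≤ ‖b‖ / (1 - (1 + ‖a‖ * ‖b‖) * ‖p' - p‖) := by
    rw [le_div_iff₀ hpos]
    nlinarith [norm_nonneg (p' * (W * b))]
  refine ⟨p' * (W * b), houter, hRr, hKr, ?_, hnb'⟩
  rw [le_div_iff₀ hpos]
  have ht0 : (0:ℝ) ≤ (1 + ‖a‖ * ‖b‖) * ‖p' - p‖ := mul_nonneg (by linarith) hN0
  have hB : ‖p' * (W * b)‖ * (1 - (1 + ‖a‖ * ‖b‖) * ‖p' - p‖) ≤ ‖b‖ := by nlinarith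
  nlinarith [mul_le_mul_of_nonneg_right h5 hpos.le, mul_le_mul_of_nonneg_left hB ht0]
end

section
/- Let A be a complex unital Banach algebra, let a ∈ A, let p, q ∈ A be idempotents, and suppose b ∈ A satisfies b·a·b = b, R_r(b) = R_r(p) and K_r(b) = R_r(q) (i.e., b = a^{(2,l)}_{p,q}). Set κ = ‖a‖·‖b‖. Let q′ ∈ A be an idempotent with ‖q − q′‖ < 1/(2 + κ). Then there exists b′ ∈ A with b′·a·b′ = b′, R_r(b′) = R_r(p) and K_r(b′) = R_r(q′) (i.e., a^{(2,l)}_{p,q′} exists), and it satisfies ‖b′ − b‖ ≤ (1 + κ)·‖q − q′‖·‖b‖ / (1 − κ·‖q − q′‖) and ‖b′‖ ≤ (1 + ‖q′ − q‖)·‖b‖ / (1 − κ·‖q′ − q‖). -/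
theorem stmt16 {A : Type*} [NormedRing A] [NormedAlgebra ℂ A] [CompleteSpace A]
    (a p q b q' : A) (hp : p * p = p) (hq : q * q = q) (hq' : q' * q' = q')
    (hb1 : b * a * b = b) (hb2 : Rr b = Rr p) (hb3 : Kr b = Rr q)
    (hqq' : ‖q - q'‖ < 1 / (2 + ‖a‖ * ‖b‖)) :
    ∃ b' : A, b' * a * b' = b' ∧ Rr b' = Rr p ∧ Kr b' = Rr q' ∧
      ‖b' - b‖ ≤ (1 + ‖a‖ * ‖b‖) * ‖q - q'‖ * ‖b‖ / (1 - ‖a‖ * ‖b‖ * ‖q - q'‖) ∧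
      ‖b'‖ ≤ (1 + ‖q' - q‖) * ‖b‖ / (1 - ‖a‖ * ‖b‖ * ‖q' - q‖) := by
  set d : A := q - q' with hd
  have hκ0 : (0:ℝ) ≤ ‖a‖ * ‖b‖ := mul_nonneg (norm_nonneg a) (norm_nonneg b)
  have h2κ : (0:ℝ) < 2 + ‖a‖ * ‖b‖ := by linarith
  have hdt : ‖d‖ * (2 + ‖a‖ * ‖b‖) < 1 := (lt_div_iff₀ h2κ).mp hqq'
  have hdn : (0:ℝ) ≤ ‖d‖ := norm_nonneg d
  have hκd : ‖a‖ * ‖b‖ * ‖d‖ < 1 := by nlinarith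
  have hd1 : ‖d‖ < 1 := by nlinarith
  -- basic algebraic facts
  have hbq : b * q = 0 := by
    have h1 : q ∈ Rr q := ⟨q, hq.symm⟩
    rw [← hb3] at h1
    exact h1
  have hqab : q * (1 - a * b) = 1 - a * b := by
    have h1 : (1 - a * b) ∈ Kr b := by
      show b * (1 - a * b) = 0
      rw [mul_sub, mul_one, ← mul_assoc, hb1, sub_self]
    rw [hb3] at h1
    obtain ⟨x, hx⟩ := h1
    rw [hx, ← mul_assoc, hq]
  -- units
  have hvlt : ‖-(d * (a * b))‖ < 1 := by
    rw [norm_neg]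
    calc ‖d * (a * b)‖ ≤ ‖d‖ * ‖a * b‖ := norm_mul_le _ _
      _ ≤ ‖d‖ * (‖a‖ * ‖b‖) := by
          exact mul_le_mul_of_nonneg_left (norm_mul_le _ _) hdn
      _ < 1 := by nlinarith
  obtain ⟨V, hV⟩ : ∃ V : Aˣ, (V : A) = 1 + d * (a * b) :=
    ⟨Units.oneSub (-(d * (a * b))) hvlt, sub_neg_eq_add 1 (d * (a * b))⟩
  have hmlt : ‖-d‖ < 1 := by rwa [norm_neg]
  obtain ⟨M, hM⟩ : ∃ M : Aˣ, (M : A) = 1 + d :=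
    ⟨Units.oneSub (-d) hmlt, sub_neg_eq_add 1 d⟩
  obtain ⟨N, hN⟩ : ∃ N : Aˣ, (N : A) = 1 - d := ⟨Units.oneSub d hd1, rfl⟩
  -- key identities
  have hvq : (V : A) * q = q := by
    rw [hV, add_mul, one_mul, mul_assoc, mul_assoc, hbq, mul_zero, mul_zero, add_zero]
  have hviq : (↑V⁻¹ : A) * q = q := by
    conv_lhs => rw [← hvq, ← mul_assoc, Units.inv_mul, one_mul]
  have hVab : (↑V⁻¹ : A) * (a * b - 1) = a * b - 1 := by
    have h1 : a * b - 1 = -(q * (1 - a * b)) := by rw [hqab]; abel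
    rw [h1, mul_neg, ← mul_assoc, hviq]
  set b' : A := b * (↑V⁻¹ * (1 + d)) with hb'
  have hmab : (1 + d) * (a * b) = (V : A) + (a * b - 1) := by rw [hV]; noncomm_ring
  have hcore : b * (↑V⁻¹ * ((1 + d) * (a * b))) = b := by
    rw [hmab, mul_add, Units.inv_mul, hVab]
    have h1 : (1:A) + (a * b - 1) = a * b := by abel
    rw [h1, ← mul_assoc, hb1]
  have hcore' : b' * (a * b) = b := by
    rw [hb']
    calc b * (↑V⁻¹ * (1 + d)) * (a * b) = b * (↑V⁻¹ * ((1 + d) * (a * b))) := by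
          simp only [mul_assoc]
      _ = b := hcore
  have hkey : b' + b * (d * (a * b')) = b * (1 + d) := by
    have h1 : b' + b * (d * (a * b')) = (b * (V : A)) * (↑V⁻¹ * (1 + d)) := by
      rw [hb', hV]; noncomm_ring
    rw [h1, mul_assoc, ← mul_assoc (V : A), Units.mul_inv, one_mul]
  have he : b' = b * (1 + d) - b * (d * (a * b')) := by rw [← hkey]; abel
  have hpos : (0:ℝ) < 1 - ‖a‖ * ‖b‖ * ‖d‖ := by linarith
  have hbd : ‖b * (d * (a * b'))‖ ≤ ‖b‖ * (‖d‖ * (‖a‖ * ‖b'‖)) := by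
    calc ‖b * (d * (a * b'))‖ ≤ ‖b‖ * ‖d * (a * b')‖ := norm_mul_le _ _
      _ ≤ ‖b‖ * (‖d‖ * (‖a‖ * ‖b'‖)) := by
          refine mul_le_mul_of_nonneg_left ?_ (norm_nonneg b)
          exact le_trans (norm_mul_le _ _)
            (mul_le_mul_of_nonneg_left (norm_mul_le a b') hdn)
  have hb1d : ‖b * (1 + d)‖ ≤ ‖b‖ + ‖b‖ * ‖d‖ := by
    calc ‖b * (1 + d)‖ = ‖b + b * d‖ := by rw [mul_add, mul_one]
      _ ≤ ‖b‖ + ‖b * d‖ := norm_add_le _ _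
      _ ≤ ‖b‖ + ‖b‖ * ‖d‖ := by linarith [norm_mul_le b d]
  have hb'n : ‖b'‖ * (1 - ‖a‖ * ‖b‖ * ‖d‖) ≤ (1 + ‖d‖) * ‖b‖ := by
    have h2 : ‖b'‖ ≤ ‖b * (1 + d)‖ + ‖b * (d * (a * b'))‖ := by
      have := norm_sub_le (b * (1 + d)) (b * (d * (a * b')))
      rw [← he] at this; exact this
    nlinarith [norm_nonneg b']
  have hsplit : b' - b = b * d - b * (d * (a * b')) := by
    conv_lhs => rw [he]
    rw [mul_add, mul_one]; abel
  have hc1 : ‖b' - b‖ ≤ ‖b‖ * ‖d‖ + ‖b‖ * (‖d‖ * (‖a‖ * ‖b'‖)) := by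
    rw [hsplit]
    calc ‖b * d - b * (d * (a * b'))‖ ≤ ‖b * d‖ + ‖b * (d * (a * b'))‖ := norm_sub_le _ _
      _ ≤ ‖b‖ * ‖d‖ + ‖b‖ * (‖d‖ * (‖a‖ * ‖b'‖)) := by linarith [norm_mul_le b d, hbd]
  refine ⟨b', ?_, ?_, ?_, ?_, ?_⟩
  · -- outer inverse
    calc b' * a * b' = b' * (a * b) * (↑V⁻¹ * (1 + d)) := by rw [hb']; simp only [mul_assoc]
      _ = b * (↑V⁻¹ * (1 + d)) := by rw [hcore']
      _ = b' := hb'.symm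
  · -- range
    rw [← hb2]
    ext y
    constructor
    · rintro ⟨x, rfl⟩
      exact ⟨↑V⁻¹ * (1 + d) * x, by rw [hb']; simp only [mul_assoc]⟩
    · rintro ⟨x, rfl⟩
      exact ⟨a * b * x, by rw [← mul_assoc, hcore']⟩
  · -- kernel
    have hmq' : (1 + d) * q' = q * q' := by
      rw [hd]; rw [add_mul, one_mul, sub_mul, hq']; abel
    have hqn : q * (1 - d) = q * q' := by
      rw [hd, mul_sub, mul_one, mul_sub, hq]; abel
    ext y
    constructor
    · intro hy
      have hy' : b * (↑V⁻¹ * ((1 + d) * y)) = 0 := by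
        have : b' * y = 0 := hy
        rw [hb'] at this
        calc b * (↑V⁻¹ * ((1 + d) * y)) = b * (↑V⁻¹ * (1 + d)) * y := by
              simp only [mul_assoc]
          _ = 0 := this
      have hmem : (↑V⁻¹ * ((1 + d) * y)) ∈ Kr b := hy'
      rw [hb3] at hmem
      obtain ⟨z, hz⟩ := hmem
      have h1 : (1 + d) * y = q * z := by
        have := congrArg (fun t => (V : A) * t) hz
        rw [← mul_assoc, Units.mul_inv, one_mul, ← mul_assoc, hvq] at this
        exact this
      have h2 : y = ↑M⁻¹ * (q * z) := by
        rw [← h1, ← hM, ← mul_assoc, Units.inv_mul, one_mul]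
      -- M⁻¹ * q = q' * N⁻¹
      have h3 : q * (N : A) = (M : A) * q' := by rw [hM, hN, hqn, hmq']
      have h4 : (↑M⁻¹ : A) * q = q' * ↑N⁻¹ := by
        rw [Units.eq_mul_inv_iff_mul_eq, mul_assoc, h3, ← mul_assoc, Units.inv_mul, one_mul]
      exact ⟨↑N⁻¹ * z, by rw [h2, ← mul_assoc, h4, mul_assoc]⟩
    · rintro ⟨z, rfl⟩
      show b' * (q' * z) = 0
      have h5 : b' * q' = 0 := by
        rw [hb']
        calc b * (↑V⁻¹ * (1 + d)) * q' = b * (↑V⁻¹ * ((1 + d) * q')) := by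
              simp only [mul_assoc]
          _ = b * (↑V⁻¹ * (q * q')) := by rw [hmq']
          _ = b * ((↑V⁻¹ * q) * q') := by simp only [mul_assoc]
          _ = b * (q * q') := by rw [hviq]
          _ = (b * q) * q' := by rw [mul_assoc]
          _ = 0 := by rw [hbq, zero_mul]
      rw [← mul_assoc, h5, zero_mul]
  · -- first norm bound
    rw [le_div_iff₀ hpos]
    nlinarith [mul_le_mul_of_nonneg_right hc1 hpos.le,
      mul_le_mul_of_nonneg_left hb'n (mul_nonneg hκ0 hdn),
      norm_nonneg b', norm_nonneg b, hdn, hκ0]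
  · -- second norm bound
    rw [norm_sub_rev q' q, ← hd, le_div_iff₀ hpos]
    linarith [hb'n]
end

section
/- Let A be a complex unital Banach algebra, let a, δa ∈ A, let p, q ∈ A be idempotents, and suppose b ∈ A satisfies b·a·b = b, R_r(b) = R_r(p) and K_r(b) = R_r(q) (i.e., b = a^{(2,l)}_{p,q}). Set κ = ‖a‖·‖b‖ and ā = a + δa. Let p′, q′ ∈ A be idempotents with ‖p − p′‖ < 1/(κ + 1)², ‖q − q′‖ < 1/(κ + 3), and assume ‖b‖·‖δa‖ < 2κ/((κ + 1)·(κ + 4)). Then there exists c ∈ A with c·ā·c = c, R_r(c) = R_r(p′) and K_r(c) = R_r(q′) (i.e., ā^{(2,l)}_{p′,q′} exists), and it satisfies ‖c‖ ≤ (1 + ‖q − q′‖)·‖b‖ / (1 − (1 + κ)·‖p − p′‖ − κ·‖q − q′‖ − (1 + ‖q − q′‖)·‖b‖·‖δa‖) and ‖c − b‖ ≤ [‖b‖ / (1 − (1 + κ)·‖p − p′‖ − κ·‖q − q′‖)] · [ (1 + κ)·(‖p − p′‖ + ‖q − q′‖) + (1 + ‖q − q′‖)²·‖δa‖·‖b‖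 / (1 − (1 + κ)·‖p − p′‖ − κ·‖q − q′‖ − (1 + ‖q − q′‖)·‖b‖·‖δa‖) ]. -/
/-!
The outer inverse is moved one datum at a time, each step inverting an element `1 - t` with
`‖t‖ < 1` by a Neumann series. If `b = a^{(2)}_{p,q}` and `p'` is an idempotent near `p`, then
`b₁ = p' (1 - b a (p - p'))⁻¹ b` is an outer inverse of `a` with range `p' A` and the kernel of `b`.
In the opposite ring the kernel condition `K_r(b) = q A` becomes the range condition for the
idempotent `1 - q`, so the same construction moves the kernel from `q A` to `q' A`. Finally, if
`c₀` is an outer inverse of `a`, then `c₀ (1 + δa c₀)⁻¹` is an outer inverse of `a + δa` with the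
range and kernel of `c₀`. The hypotheses on `‖p - p'‖`, `‖q - q'‖` and `‖b‖ ‖δa‖` are what make
the three Neumann series converge, and their estimates compose to the stated bounds.
-/

section Ring

variable {A : Type*} [Ring A]

/-- The equational form of `b * a * b = b ∧ Rr b = Rr p` for an idempotent `p`. -/
structure IsOuterInverseWithRange (a b p : A) : Prop where
  outer : b * a * b = b
  left_mul : p * b = b
  range : b * a * p = p

theorem IsOuterInverseWithRange.of_eq_mul {a b p y : A} (hbab : b * a * b = b) (hpb : p * b = b)
    (hp : p = b * y) : IsOuterInverseWithRange a b p :=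
  ⟨hbab, hpb, by rw [hp, ← mul_assoc, hbab]⟩

theorem IsOuterInverseWithRange.rr_eq {a b p : A} (h : IsOuterInverseWithRange a b p) :
    Rr b = Rr p := by
  ext y
  constructor
  · rintro ⟨x, rfl⟩
    exact ⟨b * x, by rw [← mul_assoc, h.left_mul]⟩
  · rintro ⟨x, rfl⟩
    exact ⟨a * p * x, by rw [← mul_assoc, ← mul_assoc, h.range]⟩

theorem isOuterInverseWithRange_of_rr_eq {a b p : A} (hbab : b * a * b = b)
    (hp : IsIdempotentElem p) (h : Rr b = Rr p) : IsOuterInverseWithRange a b p := by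
  obtain ⟨x, hx⟩ : b ∈ Rr p := h ▸ ⟨1, (mul_one b).symm⟩
  obtain ⟨y, hy⟩ : p ∈ Rr b := h ▸ ⟨1, (mul_one p).symm⟩
  exact .of_eq_mul hbab (by rw [hx, ← mul_assoc, hp]) hy

open MulOpposite in
theorem isOuterInverseWithRange_op_of_kr_eq {a b q : A} (hbab : b * a * b = b)
    (hq : IsIdempotentElem q) (h : Kr b = Rr q) :
    IsOuterInverseWithRange (op a) (op b) (op (1 - q)) := by
  have hbq : b * q = 0 := (h ▸ ⟨q, hq.symm⟩ : q ∈ Kr b)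
  obtain ⟨y, hy⟩ : 1 - a * b ∈ Rr q := h ▸ (show b * (1 - a * b) = 0 by
    rw [mul_sub, mul_one, ← mul_assoc, hbab, sub_self])
  have hqab : (1 - q) * (1 - a * b) = 0 := by
    rw [hy, ← mul_assoc, sub_mul, one_mul, hq, sub_self, zero_mul]
  refine ⟨?_, ?_, ?_⟩
  · rw [← op_mul, ← op_mul, ← mul_assoc, hbab]
  · rw [← op_mul, mul_sub, mul_one, hbq, sub_zero]
  · rw [← op_mul, ← op_mul]
    congr 1
    calc (1 - q) * (a * b) = (1 - q) - (1 - q) * (1 - a * b) := by noncomm_ring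
      _ = 1 - q := by rw [hqab, sub_zero]

open MulOpposite in
theorem IsOuterInverseWithRange.kr_eq_of_op {a b q : A} (hq : IsIdempotentElem q)
    (h : IsOuterInverseWithRange (op a) (op b) (op (1 - q))) : Kr b = Rr q := by
  have hb : b * (1 - q) = b := op_injective h.left_mul
  have hqab : (1 - q) * a * b = 1 - q := op_injective (by simpa [mul_assoc] using h.range)
  ext x
  constructor
  · intro (hx : b * x = 0)
    refine ⟨x, ?_⟩
    have : (1 - q) * x = 0 := by rw [← hqab, mul_assoc, hx, mul_zero]
    rwa [sub_mul, one_mul, sub_eq_zero] at this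
  · rintro ⟨y, rfl⟩
    show b * (q * y) = 0
    rw [← hb, mul_assoc, ← mul_assoc _ q, sub_mul, one_mul, hq, sub_self, zero_mul, mul_zero]

theorem rr_eq_of_mul_eq {b c x y : A} (hc : c = b * x) (hb : b = c * y) : Rr c = Rr b := by
  ext z
  constructor
  · rintro ⟨w, rfl⟩; exact ⟨x * w, by rw [hc, mul_assoc]⟩
  · rintro ⟨w, rfl⟩; exact ⟨y * w, by rw [hb, mul_assoc]⟩

theorem kr_eq_of_mul_eq {b c x y : A} (hc : c = x * b) (hb : b = y * c) : Kr c = Kr b := by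
  ext z
  constructor
  · intro (hz : c * z = 0); show b * z = 0; rw [hb, mul_assoc, hz, mul_zero]
  · intro (hz : b * z = 0); show c * z = 0; rw [hc, mul_assoc, hz, mul_zero]

theorem Units.inv_mul_eq_add_mul_inv_mul {u : Aˣ} {s : A} (hu : (u : A) = 1 - s) (b : A) :
    ↑u⁻¹ * b = b + s * (↑u⁻¹ * b) := by
  calc ↑u⁻¹ * b = b + s * (↑u⁻¹ * b) + (u * (↑u⁻¹ * b) - b) := by rw [hu]; noncomm_ring
    _ = _ := by rw [u.mul_inv_cancel_left, sub_self, add_zero]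

theorem IsOuterInverseWithRange.perturb {a b p p' : A} (h : IsOuterInverseWithRange a b p)
    (hp' : IsIdempotentElem p') (u z : Aˣ) (hu : (u : A) = 1 - b * a * (p - p'))
    (hz : (z : A) = 1 - (p' - p - b * a * (p' - p))) :
    IsOuterInverseWithRange a (p' * ↑u⁻¹ * b) p' ∧ b * a * (p' * ↑u⁻¹ * b) = b ∧
      p' * ↑u⁻¹ * b - b = (p' - p - b * a * (p' - p)) * (↑u⁻¹ * b) := by
  have hwb := Units.inv_mul_eq_add_mul_inv_mul hu b
  obtain ⟨w, hw⟩ : ∃ w, w = (↑u⁻¹ * b : A) := ⟨_, rfl⟩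
  rw [mul_assoc p', ← hw]
  rw [← hw] at hwb
  have hpw : p * w = w := by
    calc p * w = p * b + p * b * a * (p - p') * w := by
          conv_lhs => rw [hwb]
          noncomm_ring
      _ = w := by rw [h.left_mul, ← hwb]
  have hbac : b * a * (p' * w) = b := by
    calc b * a * (p' * w) = b * a * p * w - b * a * (p - p') * w := by noncomm_ring
      _ = b := by rw [h.range, hpw]; nth_rewrite 1 [hwb]; noncomm_ring
  have houter : p' * w * a * (p' * w) = p' * w := by
    calc p' * w * a * (p' * w) = p' * ↑u⁻¹ * (b * a * (p' * w)) := by rw [hw]; noncomm_ring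
      _ = p' * w := by rw [hbac, hw, mul_assoc]
  have hp'z : p' * (z : A) = p' * (b * a) * p' := by
    calc p' * (z : A) = p' - p' * p' + p' * p - p' * (b * a * p) + p' * (b * a) * p' := by
          rw [hz]; noncomm_ring
      _ = _ := by rw [hp', h.range]; noncomm_ring
  have hbau : b * a * (1 + (p' - p) * (b * a)) = u * (b * a) := by rw [hu]; noncomm_ring
  -- `p' z = p' (b a) p'` exhibits `p'` as a right multiple of `p' w`, since `z` is a unit
  have hp'w : p' = p' * w * (a * ((1 + (p' - p) * (b * a)) * (b * a) * p' * ↑z⁻¹)) := by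
    symm
    calc p' * w * (a * ((1 + (p' - p) * (b * a)) * (b * a) * p' * ↑z⁻¹))
        = p' * ↑u⁻¹ * (b * a * (1 + (p' - p) * (b * a))) * (b * a) * p' * ↑z⁻¹ := by
          rw [hw]; noncomm_ring
      _ = p' * (b * a * b * a) * p' * ↑z⁻¹ := by rw [hbau]; simp [mul_assoc]
      _ = p' := by rw [h.outer, ← hp'z, mul_assoc, z.mul_inv, mul_one]
  refine ⟨.of_eq_mul houter (by rw [← mul_assoc, hp']) hp'w, hbac, ?_⟩
  calc p' * w - b
      = (p' - p - b * a * (p' - p)) * w + (w - b * a * (p - p') * w - b) + (p * w - w) := by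
        noncomm_ring
    _ = _ := by rw [hpw, sub_self, add_zero]; nth_rewrite 2 [hwb]; noncomm_ring

end Ring

theorem norm_le_div_one_sub_of_norm_sub_le {E : Type*} [SeminormedAddGroup E] {w b : E}
    {κ β : ℝ} (hwb : ‖w - b‖ ≤ κ * ‖w‖) (hb : ‖b‖ ≤ β) (hκ : κ < 1) : ‖w‖ ≤ β / (1 - κ) := by
  rw [le_div_iff₀ (by linarith)]
  linarith [norm_le_insert' w b]

section Normed

variable {A : Type*} [NormedRing A] [CompleteSpace A]

theorem IsOuterInverseWithRange.exists_perturb {a b p p' : A}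
    (h : IsOuterInverseWithRange a b p) (hp' : IsIdempotentElem p') {k β : ℝ}
    (hk : ‖b * a‖ ≤ k) (hβ : ‖b‖ ≤ β) (hsmall : (1 + k) * ‖p - p'‖ < 1) :
    ∃ c, IsOuterInverseWithRange a c p' ∧ b * a * c = b ∧ (∃ x, c = x * b) ∧
      ‖c - b‖ ≤ (1 + k) * ‖p - p'‖ * β / (1 - k * ‖p - p'‖) := by
  set ε := ‖p - p'‖
  have hk₀ : 0 ≤ k := (norm_nonneg _).trans hk
  have hs : ‖b * a * (p - p')‖ ≤ k * ε := (norm_mul_le _ _).trans (by gcongr)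
  have ht : ‖p' - p - b * a * (p' - p)‖ ≤ (1 + k) * ε := calc
    _ ≤ ‖p' - p‖ + ‖b * a‖ * ‖p' - p‖ :=
        (norm_sub_le _ _).trans (by gcongr; exact norm_mul_le _ _)
    _ ≤ (1 + k) * ε := by rw [norm_sub_rev]; nlinarith [norm_nonneg (p - p')]
  have hkε : k * ε < 1 := by nlinarith [norm_nonneg (p - p')]
  let u := Units.oneSub _ (hs.trans_lt hkε)
  let z := Units.oneSub _ (ht.trans_lt hsmall)
  have hu : (u : A) = 1 - b * a * (p - p') := Units.val_oneSub _ _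
  obtain ⟨hc, hbac, hcb⟩ := h.perturb hp' u z hu (Units.val_oneSub _ _)
  refine ⟨_, hc, hbac, ⟨_, rfl⟩, ?_⟩
  have hw : ‖(↑u⁻¹ * b : A)‖ ≤ β / (1 - k * ε) := by
    refine norm_le_div_one_sub_of_norm_sub_le ?_ hβ hkε
    rw [sub_eq_iff_eq_add'.mpr (Units.inv_mul_eq_add_mul_inv_mul hu b)]
    exact (norm_mul_le _ _).trans (by gcongr)
  rw [hcb, mul_div_assoc]
  exact (norm_mul_le _ _).trans (mul_le_mul ht hw (norm_nonneg _) (by positivity))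

theorem exists_outerInverse_perturb_range {a b p p' : A} (hbab : b * a * b = b)
    (hp : IsIdempotentElem p) (hp' : IsIdempotentElem p') (hb : Rr b = Rr p) {k β : ℝ}
    (hk : ‖b * a‖ ≤ k) (hβ : ‖b‖ ≤ β) (hsmall : (1 + k) * ‖p - p'‖ < 1) :
    ∃ c, c * a * c = c ∧ Rr c = Rr p' ∧ Kr c = Kr b ∧
      ‖c - b‖ ≤ (1 + k) * ‖p - p'‖ * β / (1 - k * ‖p - p'‖) := by
  obtain ⟨c, hc, hbac, ⟨x, rfl⟩, hnorm⟩ :=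
    (isOuterInverseWithRange_of_rr_eq hbab hp hb).exists_perturb hp' hk hβ hsmall
  exact ⟨_, hc.outer, hc.rr_eq, kr_eq_of_mul_eq rfl hbac.symm, hnorm⟩

open MulOpposite in
theorem exists_outerInverse_perturb_kernel {a b q q' : A} (hbab : b * a * b = b)
    (hq : IsIdempotentElem q) (hq' : IsIdempotentElem q') (hb : Kr b = Rr q) {k β : ℝ}
    (hk : ‖a * b‖ ≤ k) (hβ : ‖b‖ ≤ β) (hsmall : (1 + k) * ‖q - q'‖ < 1) :
    ∃ c, c * a * c = c ∧ Rr c = Rr b ∧ Kr c = Rr q' ∧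
      ‖c - b‖ ≤ (1 + k) * ‖q - q'‖ * β / (1 - k * ‖q - q'‖) := by
  have hdist : ‖op (1 - q) - op (1 - q')‖ = ‖q - q'‖ := by
    rw [← op_sub, norm_op, sub_sub_sub_cancel_left, norm_sub_rev]
  obtain ⟨c, hc, hbac, ⟨x, hx⟩, hnorm⟩ :=
    (isOuterInverseWithRange_op_of_kr_eq hbab hq hb).exists_perturb (p' := op (1 - q'))
      (k := k) (β := β) (congrArg op hq'.one_sub.eq) (by rwa [← op_mul, norm_op])
      (by rwa [norm_op]) (by rwa [hdist])
  refine ⟨c.unop, ?_, rr_eq_of_mul_eq (x := x.unop) (y := a * b) ?_ ?_, hc.kr_eq_of_op hq', ?_⟩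
  · exact op_injective (by simpa [mul_assoc] using hc.outer)
  · exact congrArg unop hx
  · exact op_injective (by simpa [mul_assoc] using hbac.symm)
  · rw [hdist] at hnorm
    rwa [← norm_op, op_sub, op_unop]

theorem exists_outerInverse_perturb_add {a b δ : A} (hbab : b * a * b = b) {β : ℝ}
    (hβ : ‖b‖ ≤ β) (hsmall : ‖δ‖ * β < 1) :
    ∃ c, c * (a + δ) * c = c ∧ Rr c = Rr b ∧ Kr c = Kr b ∧ ‖c‖ ≤ β / (1 - ‖δ‖ * β) ∧
      ‖c - b‖ ≤ ‖δ‖ * β ^ 2 / (1 - ‖δ‖ * β) := by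
  have hδb : ‖δ‖ * ‖b‖ ≤ ‖δ‖ * β := by gcongr
  obtain ⟨g, hg⟩ : ∃ g : Aˣ, (g : A) = 1 + δ * b := ⟨Units.oneSub (-(δ * b))
    (by rw [norm_neg]; exact (norm_mul_le _ _).trans_lt (hδb.trans_lt hsmall)),
    by rw [Units.val_oneSub, sub_neg_eq_add]⟩
  obtain ⟨c, hc⟩ : ∃ c, c = b * ↑g⁻¹ := ⟨_, rfl⟩
  have hcg : c * g = b := by rw [hc, g.inv_mul_cancel_right]
  have hcb : c = (1 - c * δ) * b := by
    calc c = c * g - c * δ * b := by rw [hg]; noncomm_ring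
      _ = _ := by rw [hcg]; noncomm_ring
  have hcab : c * (a + δ) * b = b := by
    calc c * (a + δ) * b = c * a * b + c * δ * b := by noncomm_ring
      _ = (1 - c * δ) * (b * a * b) + c * δ * b := by nth_rewrite 1 [hcb]; noncomm_ring
      _ = b := by rw [hbab]; noncomm_ring
  have hbc : b = (1 + b * δ) * c := by
    calc b = b * g * ↑g⁻¹ := by rw [g.mul_inv_cancel_right]
      _ = (1 + b * δ) * (b * ↑g⁻¹) := by rw [hg]; noncomm_ring
      _ = _ := by rw [hc]
  have hcb' : c - b = -(c * (δ * b)) := by nth_rewrite 1 [hcb]; noncomm_ring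
  have hdist : ‖c - b‖ ≤ ‖δ‖ * β * ‖c‖ := calc
    ‖c - b‖ = ‖c * (δ * b)‖ := by rw [hcb', norm_neg]
    _ ≤ ‖c‖ * (‖δ‖ * β) := (norm_mul_le _ _).trans (by gcongr; exact (norm_mul_le _ _).trans hδb)
    _ = _ := mul_comm _ _
  have hnorm := norm_le_div_one_sub_of_norm_sub_le hdist hβ hsmall
  refine ⟨c, ?_, rr_eq_of_mul_eq hc hcg.symm, kr_eq_of_mul_eq hcb hbc, hnorm, ?_⟩
  · calc c * (a + δ) * c = c * (a + δ) * b * ↑g⁻¹ := by rw [hc, mul_assoc _ b]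
      _ = c := by rw [hcab, hc]
  · calc ‖c - b‖ ≤ ‖δ‖ * β * (β / (1 - ‖δ‖ * β)) :=
          hdist.trans (by gcongr; exact mul_nonneg (norm_nonneg δ) ((norm_nonneg b).trans hβ))
      _ = _ := by ring

end Normed

section Estimates

-- `K`, `ε`, `η`, `B`, `d` stand for `‖a‖ * ‖b‖`, `‖p - p'‖`, `‖q - q'‖`, `‖b‖`, `‖δa‖`; the
-- common denominator of the final bounds is the gap `1 - (1 + K) * ε - K * η`.

theorem one_add_mul_lt_one_sub_mul {K ε η : ℝ} (hK : 0 ≤ K)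
    (hε : ε * (K + 1) ^ 2 < 1) (hη : η * (K + 3) < 1) : (1 + K) * η < 1 - K * ε := by
  have h1 : (1 + K) * η * (K + 3) < 1 + K := by nlinarith
  have h2 : K * ε * (K + 1) ^ 2 ≤ K := by nlinarith
  have h3 : ((1 + K) * η + K * ε) * ((K + 1) ^ 2 * (K + 3)) < 1 * ((K + 1) ^ 2 * (K + 3)) := by
    nlinarith [mul_lt_mul_of_pos_right h1 (by positivity : (0:ℝ) < (K + 1) ^ 2),
      mul_le_mul_of_nonneg_right h2 (by positivity : (0:ℝ) ≤ K + 3)]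
  linarith [lt_of_mul_lt_mul_right h3 (by positivity)]

theorem two_mul_lt_gap_mul {K ε η : ℝ} (hK : 0 ≤ K)
    (hε : ε * (K + 1) ^ 2 < 1) (hη : η * (K + 3) < 1) :
    2 * K < (1 - (1 + K) * ε - K * η) * ((K + 1) * (K + 3)) := by
  nlinarith [mul_lt_mul_of_pos_right hε (by linarith : (0:ℝ) < K + 3),
    mul_le_mul_of_nonneg_left hη.le (by nlinarith : (0:ℝ) ≤ K * (1 + K))]

theorem one_add_mul_mul_lt_gap {K ε η B d : ℝ} (hK : 0 ≤ K)
    (hB : 0 ≤ B) (hd : 0 ≤ d) (hε : ε * (K + 1) ^ 2 < 1) (hη : η * (K + 3) < 1)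
    (hBd : B * d * ((K + 1) * (K + 4)) < 2 * K) :
    (1 + η) * B * d < 1 - (1 + K) * ε - K * η := by
  have h1 : (1 + η) * (K + 3) < K + 4 := by nlinarith
  have h2 : (1 + η) * B * d * ((K + 1) * (K + 3)) < 2 * K := by
    nlinarith [mul_le_mul_of_nonneg_left h1.le (by positivity : (0:ℝ) ≤ B * d * (K + 1))]
  nlinarith [two_mul_lt_gap_mul hK hε hη]

theorem kernel_step_bound_eq {K ε η B : ℝ} (hD : 1 - K * ε ≠ 0)
    (hG : 1 - K * ε - K * (1 + ε) * η ≠ 0) :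
    (1 + K * (1 + ε) / (1 - K * ε)) * η * ((1 + ε) * B / (1 - K * ε)) /
        (1 - K * (1 + ε) / (1 - K * ε) * η) =
      (1 + K) * (1 + ε) * η * B / ((1 - K * ε) * (1 - K * ε - K * (1 + ε) * η)) := by
  have h : 1 - K * (1 + ε) / (1 - K * ε) * η = (1 - K * ε - K * (1 + ε) * η) / (1 - K * ε) := by
    field_simp
  rw [h]
  field_simp
  ring

theorem one_add_mul_gap_le {K ε η : ℝ} (hK : 0 ≤ K) :
    (1 + ε) * (1 - (1 + K) * ε - K * η) ≤ 1 - K * ε - K * (1 + ε) * η := by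
  nlinarith [sq_nonneg ε, mul_nonneg hK (sq_nonneg ε)]

theorem range_kernel_steps_norm_le {K ε η B : ℝ} (hK : 0 ≤ K) (hε : 0 ≤ ε) (hη : 0 ≤ η) (hB : 0 ≤ B)
    (hΔ : 0 < 1 - (1 + K) * ε - K * η) :
    (1 + ε) * B / (1 - K * ε) +
        (1 + K) * (1 + ε) * η * B / ((1 - K * ε) * (1 - K * ε - K * (1 + ε) * η)) ≤
      (1 + η) * B / (1 - (1 + K) * ε - K * η) := by
  have hD : 0 < 1 - K * ε := by nlinarith
  have hGΔ := one_add_mul_gap_le (ε := ε) (η := η) hK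
  have hG : 0 < 1 - K * ε - K * (1 + ε) * η := by nlinarith
  have h : (1 + ε) * B / (1 - K * ε) +
        (1 + K) * (1 + ε) * η * B / ((1 - K * ε) * (1 - K * ε - K * (1 + ε) * η)) =
      (1 + η) * B * (1 + ε) / (1 - K * ε - K * (1 + ε) * η) := by
    rw [div_add_div _ _ hD.ne' (by positivity), div_eq_div_iff (by positivity) hG.ne']
    ring
  rw [h, div_le_div_iff₀ hG hΔ]
  nlinarith [mul_le_mul_of_nonneg_left hGΔ (by positivity : (0:ℝ) ≤ (1 + η) * B)]

theorem range_kernel_steps_dist_le {K ε η B : ℝ} (hK : 0 ≤ K) (hε : 0 ≤ ε) (hη : 0 ≤ η) (hB : 0 ≤ B)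
    (hΔ : 0 < 1 - (1 + K) * ε - K * η) :
    (1 + K) * ε * B / (1 - K * ε) +
        (1 + K) * (1 + ε) * η * B / ((1 - K * ε) * (1 - K * ε - K * (1 + ε) * η)) ≤
      (1 + K) * (ε + η) * B / (1 - (1 + K) * ε - K * η) := by
  set D := 1 - K * ε
  set G := 1 - K * ε - K * (1 + ε) * η
  set Δ := 1 - (1 + K) * ε - K * η
  have hD : 0 < D := by nlinarith
  have hGΔ : (1 + ε) * Δ ≤ G := one_add_mul_gap_le hK
  have hG : 0 < G := by nlinarith
  have h1 : (1 + ε) * η * Δ ≤ η * G := by nlinarith [mul_le_mul_of_nonneg_left hGΔ hη]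
  have h2 : ε * Δ + η ≤ D * (ε + η) := by nlinarith [sq_nonneg ε]
  have key : (ε * G + (1 + ε) * η) * Δ ≤ (ε + η) * (D * G) := by
    nlinarith [mul_le_mul_of_nonneg_left h2 hG.le]
  calc (1 + K) * ε * B / D + (1 + K) * (1 + ε) * η * B / (D * G)
      = (1 + K) * B * ((ε * G + (1 + ε) * η) / (D * G)) := by field_simp
    _ ≤ (1 + K) * B * ((ε + η) / Δ) := by
        gcongr (1 + K) * B * ?_
        rw [div_le_div_iff₀ (by positivity) hΔ]
        exact key
    _ = (1 + K) * (ε + η) * B / Δ := by ring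

theorem one_add_div_mul_lt_one {K ε η : ℝ} (hD : 0 < 1 - K * ε)
    (h : (1 + K) * η < 1 - K * ε) : (1 + K * (1 + ε) / (1 - K * ε)) * η < 1 := by
  rw [show (1 + K * (1 + ε) / (1 - K * ε)) * η = (1 + K) * η / (1 - K * ε) by field_simp; ring,
    div_lt_one hD]
  exact h

theorem div_div_one_sub_mul_div {x y d : ℝ} (hy : y ≠ 0) :
    x / y / (1 - d * (x / y)) = x / (y - x * d) := by
  rw [mul_div_assoc', one_sub_div hy, div_div_div_cancel_right₀ hy, mul_comm d]

theorem mul_sq_div_one_sub_add_div {B y d r s : ℝ} (hy : y ≠ 0) :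
    d * (r * B / y) ^ 2 / (1 - d * (r * B / y)) + s * B / y =
      B / y * (s + r ^ 2 * d * B / (y - r * B * d)) := by
  have h : 1 - d * (r * B / y) = (y - r * B * d) / y := by field_simp
  rw [h]
  field_simp
  ring

end Estimates

theorem exists_outerInverse_perturb_idempotents {A : Type*} [NormedRing A] [CompleteSpace A]
    {a b p q p' q' : A} (hbab : b * a * b = b) (hp : IsIdempotentElem p)
    (hq : IsIdempotentElem q) (hp' : IsIdempotentElem p') (hq' : IsIdempotentElem q')
    (hbp : Rr b = Rr p) (hbq : Kr b = Rr q)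
    (hη : (1 + ‖a‖ * ‖b‖) * ‖q - q'‖ < 1 - ‖a‖ * ‖b‖ * ‖p - p'‖)
    (hΔ : 0 < 1 - (1 + ‖a‖ * ‖b‖) * ‖p - p'‖ - ‖a‖ * ‖b‖ * ‖q - q'‖) :
    ∃ c, c * a * c = c ∧ Rr c = Rr p' ∧ Kr c = Rr q' ∧
      ‖c‖ ≤ (1 + ‖q - q'‖) * ‖b‖ / (1 - (1 + ‖a‖ * ‖b‖) * ‖p - p'‖ - ‖a‖ * ‖b‖ * ‖q - q'‖) ∧
      ‖c - b‖ ≤ (1 + ‖a‖ * ‖b‖) * (‖p - p'‖ + ‖q - q'‖) * ‖b‖ /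
        (1 - (1 + ‖a‖ * ‖b‖) * ‖p - p'‖ - ‖a‖ * ‖b‖ * ‖q - q'‖) := by
  set K := ‖a‖ * ‖b‖
  set ε := ‖p - p'‖
  set η := ‖q - q'‖
  have hK : 0 ≤ K := by positivity
  have hD : 0 < 1 - K * ε := by nlinarith [norm_nonneg (p - p'), norm_nonneg (q - q')]
  have hG : 0 < 1 - K * ε - K * (1 + ε) * η := by
    nlinarith [one_add_mul_gap_le (ε := ε) (η := η) hK, norm_nonneg (p - p')]
  obtain ⟨b₁, hb₁, hb₁p', hb₁b, hb₁d⟩ := exists_outerInverse_perturb_range hbab hp hp' hbp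
    (k := K) (β := ‖b‖) ((norm_mul_le _ _).trans_eq (mul_comm _ _)) le_rfl
    (by nlinarith [norm_nonneg (q - q')])
  have hb₁n : ‖b₁‖ ≤ (1 + ε) * ‖b‖ / (1 - K * ε) := calc
    ‖b₁‖ ≤ ‖b‖ + ‖b₁ - b‖ := norm_le_insert' _ _
    _ ≤ ‖b‖ + (1 + K) * ε * ‖b‖ / (1 - K * ε) := by gcongr
    _ = _ := by field_simp; ring
  have hab₁ : ‖a * b₁‖ ≤ K * (1 + ε) / (1 - K * ε) := calc
    ‖a * b₁‖ ≤ ‖a‖ * ((1 + ε) * ‖b‖ / (1 - K * ε)) := (norm_mul_le _ _).trans (by gcongr)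
    _ = _ := by ring
  obtain ⟨c₀, hc₀, hc₀b₁, hc₀q', hc₀d⟩ := exists_outerInverse_perturb_kernel hb₁ hq hq'
    (hb₁b.trans hbq) hab₁ hb₁n (one_add_div_mul_lt_one hD hη)
  rw [kernel_step_bound_eq hD.ne' hG.ne'] at hc₀d
  have hc₀n : ‖c₀‖ ≤ (1 + η) * ‖b‖ / (1 - (1 + K) * ε - K * η) :=
    (norm_le_insert' _ _).trans ((add_le_add hb₁n hc₀d).trans
      (range_kernel_steps_norm_le hK (norm_nonneg _) (norm_nonneg _) (norm_nonneg _) hΔ))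
  have hc₀b : ‖c₀ - b‖ ≤ (1 + K) * (ε + η) * ‖b‖ / (1 - (1 + K) * ε - K * η) :=
    (norm_sub_le_norm_sub_add_norm_sub _ b₁ _).trans (by
      rw [add_comm]
      exact (add_le_add hb₁d hc₀d).trans
        (range_kernel_steps_dist_le hK (norm_nonneg _) (norm_nonneg _) (norm_nonneg _) hΔ))
  exact ⟨c₀, hc₀, hc₀b₁.trans hb₁p', hc₀q', hc₀n, hc₀b⟩

theorem stmt18_general {A : Type*} [NormedRing A] [CompleteSpace A]
    (a δa p q b p' q' : A) (hp : p * p = p) (hq : q * q = q)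
    (hp' : p' * p' = p') (hq' : q' * q' = q')
    (hb1 : b * a * b = b) (hb2 : Rr b = Rr p) (hb3 : Kr b = Rr q)
    (hpp' : ‖p - p'‖ < 1 / (‖a‖ * ‖b‖ + 1) ^ 2)
    (hqq' : ‖q - q'‖ < 1 / (‖a‖ * ‖b‖ + 3))
    (hδa : ‖b‖ * ‖δa‖ < 2 * (‖a‖ * ‖b‖) / ((‖a‖ * ‖b‖ + 1) * (‖a‖ * ‖b‖ + 4))) :
    ∃ c : A, c * (a + δa) * c = c ∧ Rr c = Rr p' ∧ Kr c = Rr q' ∧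
      ‖c‖ ≤ (1 + ‖q - q'‖) * ‖b‖ /
          (1 - (1 + ‖a‖ * ‖b‖) * ‖p - p'‖ - ‖a‖ * ‖b‖ * ‖q - q'‖ -
            (1 + ‖q - q'‖) * ‖b‖ * ‖δa‖) ∧
      ‖c - b‖ ≤ (‖b‖ / (1 - (1 + ‖a‖ * ‖b‖) * ‖p - p'‖ - ‖a‖ * ‖b‖ * ‖q - q'‖)) *
          ((1 + ‖a‖ * ‖b‖) * (‖p - p'‖ + ‖q - q'‖) +
            (1 + ‖q - q'‖) ^ 2 * ‖δa‖ * ‖b‖ /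
              (1 - (1 + ‖a‖ * ‖b‖) * ‖p - p'‖ - ‖a‖ * ‖b‖ * ‖q - q'‖ -
                (1 + ‖q - q'‖) * ‖b‖ * ‖δa‖)) := by
  set K := ‖a‖ * ‖b‖
  set ε := ‖p - p'‖
  set η := ‖q - q'‖
  have hK : 0 ≤ K := by positivity
  have hε : ε * (K + 1) ^ 2 < 1 := (lt_div_iff₀ (by positivity)).mp hpp'
  have hη : η * (K + 3) < 1 := (lt_div_iff₀ (by positivity)).mp hqq'
  have hd : ‖b‖ * ‖δa‖ * ((K + 1) * (K + 4)) < 2 * K := (lt_div_iff₀ (by positivity)).mp hδa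
  have hΔ : 0 < 1 - (1 + K) * ε - K * η := by
    nlinarith [two_mul_lt_gap_mul hK hε hη, (by positivity : (0:ℝ) < (K + 1) * (K + 3))]
  obtain ⟨c₀, hc₀, hc₀p', hc₀q', hc₀n, hc₀b⟩ := exists_outerInverse_perturb_idempotents hb1 hp hq
    hp' hq' hb2 hb3 (one_add_mul_lt_one_sub_mul hK hε hη) hΔ
  have hsmall : (1 + η) * ‖b‖ * ‖δa‖ < 1 - (1 + K) * ε - K * η :=
    one_add_mul_mul_lt_gap hK (norm_nonneg _) (norm_nonneg _) hε hη hd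
  obtain ⟨c, hc, hcc₀, hcc₀', hcn, hcd⟩ := exists_outerInverse_perturb_add (δ := δa) hc₀ hc₀n (by
    rw [mul_div_assoc', div_lt_one hΔ]; linarith)
  refine ⟨c, hc, hcc₀.trans hc₀p', hcc₀'.trans hc₀q', ?_, ?_⟩
  · rwa [div_div_one_sub_mul_div hΔ.ne'] at hcn
  · calc ‖c - b‖ ≤ ‖c - c₀‖ + ‖c₀ - b‖ := norm_sub_le_norm_sub_add_norm_sub _ _ _
      _ ≤ _ := add_le_add hcd hc₀b
      _ = _ := mul_sq_div_one_sub_add_div hΔ.ne'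

theorem stmt18 {A : Type*} [NormedRing A] [NormedAlgebra ℂ A] [CompleteSpace A]
    (a δa p q b p' q' : A) (hp : p * p = p) (hq : q * q = q)
    (hp' : p' * p' = p') (hq' : q' * q' = q')
    (hb1 : b * a * b = b) (hb2 : Rr b = Rr p) (hb3 : Kr b = Rr q)
    (hpp' : ‖p - p'‖ < 1 / (‖a‖ * ‖b‖ + 1) ^ 2)
    (hqq' : ‖q - q'‖ < 1 / (‖a‖ * ‖b‖ + 3))
    (hδa : ‖b‖ * ‖δa‖ < 2 * (‖a‖ * ‖b‖) / ((‖a‖ * ‖b‖ + 1) * (‖a‖ * ‖b‖ + 4))) :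
    ∃ c : A, c * (a + δa) * c = c ∧ Rr c = Rr p' ∧ Kr c = Rr q' ∧
      ‖c‖ ≤ (1 + ‖q - q'‖) * ‖b‖ /
          (1 - (1 + ‖a‖ * ‖b‖) * ‖p - p'‖ - ‖a‖ * ‖b‖ * ‖q - q'‖ -
            (1 + ‖q - q'‖) * ‖b‖ * ‖δa‖) ∧
      ‖c - b‖ ≤ (‖b‖ / (1 - (1 + ‖a‖ * ‖b‖) * ‖p - p'‖ - ‖a‖ * ‖b‖ * ‖q - q'‖)) *
          ((1 + ‖a‖ * ‖b‖) * (‖p - p'‖ + ‖q - q'‖) +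
            (1 + ‖q - q'‖) ^ 2 * ‖δa‖ * ‖b‖ /
              (1 - (1 + ‖a‖ * ‖b‖) * ‖p - p'‖ - ‖a‖ * ‖b‖ * ‖q - q'‖ -
                (1 + ‖q - q'‖) * ‖b‖ * ‖δa‖)) :=
  stmt18_general a δa p q b p' q' hp hq hp' hq' hb1 hb2 hb3 hpp' hqq' hδa
end

section
/- Let A be a complex unital Banach algebra, let a ∈ A, let p, q ∈ A be idempotents, and suppose b ∈ A satisfies a·b·a = a, b·a·b = b, b·a = p and 1 − a·b = q (i.e., b = a^{(1,2)}_{p,q}). Set κ = ‖a‖·‖b‖. Let p′ ∈ A be an idempotent with ‖p − p′‖ < 1/(1 + κ)² and a·p′ = a. Then there exists b′ ∈ A with a·b′·a = a, b′·a·b′ = b′, b′·a = p′ and 1 − a·b′ = q (i.e., a^{(1,2)}_{p′,q} exists), and it satisfies ‖b′ − b‖ ≤ (1 + κ)·‖p′ − p‖·‖b‖ / (1 − (1 + κ)·‖p′ − p‖) and ‖b′‖ ≤ ‖b‖ / (1 − (1 + κ)·‖p′ − p‖). -/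
/-!
The candidate is `b' = p' b`. Since `a p' = a`, the idempotent `p = b a` satisfies `p p' = p`, so
`z = p' - p' p` satisfies `p z = 0` and `p' z = z`, i.e. `z = (p' - p) z`; as `‖p' - p‖ < 1` this
forces `z = 0`, i.e. `p' p = p'`. With this the four defining identities of `a^{(1,2)}_{p',q}` are
direct computations, and `p' b - b = (p' - p) b` gives both norm bounds.
-/

/-- `b = a^{(1,2)}_{p,q}`. -/
structure IsPQInverse {A : Type*} [Ring A] (a b p q : A) : Prop where
  mul_mul_self : a * b * a = a
  self_mul_mul : b * a * b = b
  mul_eq : b * a = p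
  one_sub_mul_eq : 1 - a * b = q

section NormedRing

variable {A : Type*} [NormedRing A]

theorem eq_zero_of_eq_mul_of_norm_lt_one {x z : A} (h : z = x * z) (hx : ‖x‖ < 1) : z = 0 := by
  have hle : ‖z‖ ≤ ‖x‖ * ‖z‖ := calc
    ‖z‖ = ‖x * z‖ := congrArg _ h
    _ ≤ ‖x‖ * ‖z‖ := norm_mul_le x z
  exact norm_le_zero_iff.mp (by nlinarith [norm_nonneg z])

theorem IsIdempotentElem.mul_eq_left_of_norm_sub_lt_one {p p' : A}
    (hp : IsIdempotentElem p) (hp' : IsIdempotentElem p') (hpp' : p * p' = p)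
    (hnorm : ‖p' - p‖ < 1) : p' * p = p' := by
  have hz : p' - p' * p = (p' - p) * (p' - p' * p) := by
    rw [sub_mul, mul_sub p', mul_sub p, ← mul_assoc, ← mul_assoc, hp'.eq, hpp', hp.eq]
    abel
  exact (sub_eq_zero.mp (eq_zero_of_eq_mul_of_norm_lt_one hz hnorm)).symm

end NormedRing

theorem IsPQInverse.idempotent_mul {A : Type*} [Ring A] {a b p q p' : A}
    (h : IsPQInverse a b p q) (hp' : IsIdempotentElem p') (hp'p : p' * p = p')
    (hap' : a * p' = a) : IsPQInverse a (p' * b) p' q where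
  mul_mul_self := by rw [← mul_assoc, hap', h.mul_mul_self]
  self_mul_mul := by rw [mul_assoc p' b a, h.mul_eq, hp'p, ← mul_assoc, hp'.eq]
  mul_eq := by rw [mul_assoc, h.mul_eq, hp'p]
  one_sub_mul_eq := by rw [← mul_assoc, hap', h.one_sub_mul_eq]

theorem one_add_mul_lt_one_of_lt_one_div_sq {κ t : ℝ} (hκ : 0 ≤ κ)
    (h : t < 1 / (1 + κ) ^ 2) : (1 + κ) * t < 1 := by
  rw [lt_div_iff₀ (by positivity)] at h
  nlinarith

section PerturbationBounds

variable {κ t x : ℝ}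

theorem mul_le_one_add_mul_div_one_sub (hκ : 0 ≤ κ) (ht : 0 ≤ t) (hx : 0 ≤ x)
    (hsmall : (1 + κ) * t < 1) : t * x ≤ (1 + κ) * t * x / (1 - (1 + κ) * t) := by
  calc t * x ≤ (1 + κ) * t * x := by nlinarith [mul_nonneg hκ (mul_nonneg ht hx)]
    _ ≤ _ := le_div_self (by positivity) (by linarith) (by nlinarith)

theorem add_mul_le_div_one_sub (hκ : 0 ≤ κ) (ht : 0 ≤ t) (hx : 0 ≤ x)
    (hsmall : (1 + κ) * t < 1) : x + t * x ≤ x / (1 - (1 + κ) * t) := by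
  have hfactor : (1 + t) * (1 - (1 + κ) * t) ≤ 1 := by
    nlinarith [mul_nonneg hκ ht, mul_nonneg (by linarith : (0 : ℝ) ≤ 1 + κ) (mul_self_nonneg t)]
  rw [le_div_iff₀ (by linarith)]
  nlinarith [mul_le_of_le_one_right hx hfactor]

end PerturbationBounds

theorem stmt19_general {A : Type*} [NormedRing A]
    (a p q b p' : A) (hp : p * p = p) (hp' : p' * p' = p')
    (hb0 : a * b * a = a) (hb1 : b * a * b = b) (hb2 : b * a = p) (hb3 : 1 - a * b = q)
    (hpp' : ‖p - p'‖ < 1 / (1 + ‖a‖ * ‖b‖) ^ 2) (hap' : a * p' = a) :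
    ∃ b' : A, a * b' * a = a ∧ b' * a * b' = b' ∧ b' * a = p' ∧ 1 - a * b' = q ∧
      ‖b' - b‖ ≤ (1 + ‖a‖ * ‖b‖) * ‖p' - p‖ * ‖b‖ / (1 - (1 + ‖a‖ * ‖b‖) * ‖p' - p‖) ∧
      ‖b'‖ ≤ ‖b‖ / (1 - (1 + ‖a‖ * ‖b‖) * ‖p' - p‖) := by
  have hκ : 0 ≤ ‖a‖ * ‖b‖ := by positivity
  have ht : 0 ≤ ‖p' - p‖ := norm_nonneg _
  have hsmall : (1 + ‖a‖ * ‖b‖) * ‖p' - p‖ < 1 :=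
    one_add_mul_lt_one_of_lt_one_div_sq hκ (by rwa [norm_sub_rev] at hpp')
  have hp'p : p' * p = p' := by
    refine IsIdempotentElem.mul_eq_left_of_norm_sub_lt_one hp hp' ?_ (by nlinarith)
    rw [← hb2, mul_assoc, hap']
  have hdiff : ‖p' * b - b‖ ≤ ‖p' - p‖ * ‖b‖ := calc
    ‖p' * b - b‖ = ‖(p' - p) * b‖ := by rw [sub_mul, ← hb2, hb1]
    _ ≤ ‖p' - p‖ * ‖b‖ := norm_mul_le _ _
  obtain ⟨h0, h1, h2, h3⟩ := IsPQInverse.idempotent_mul ⟨hb0, hb1, hb2, hb3⟩ hp' hp'p hap'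
  refine ⟨p' * b, h0, h1, h2, h3, ?_, ?_⟩
  · exact hdiff.trans (mul_le_one_add_mul_div_one_sub hκ ht (norm_nonneg b) hsmall)
  · calc ‖p' * b‖ ≤ ‖b‖ + ‖p' * b - b‖ := norm_le_insert' _ _
      _ ≤ ‖b‖ + ‖p' - p‖ * ‖b‖ := by gcongr
      _ ≤ _ := add_mul_le_div_one_sub hκ ht (norm_nonneg b) hsmall

theorem stmt19 {A : Type*} [NormedRing A] [NormedAlgebra ℂ A] [CompleteSpace A]
    (a p q b p' : A) (hp : p * p = p) (hq : q * q = q) (hp' : p' * p' = p')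
    (hb0 : a * b * a = a) (hb1 : b * a * b = b) (hb2 : b * a = p) (hb3 : 1 - a * b = q)
    (hpp' : ‖p - p'‖ < 1 / (1 + ‖a‖ * ‖b‖) ^ 2) (hap' : a * p' = a) :
    ∃ b' : A, a * b' * a = a ∧ b' * a * b' = b' ∧ b' * a = p' ∧ 1 - a * b' = q ∧
      ‖b' - b‖ ≤ (1 + ‖a‖ * ‖b‖) * ‖p' - p‖ * ‖b‖ / (1 - (1 + ‖a‖ * ‖b‖) * ‖p' - p‖) ∧
      ‖b'‖ ≤ ‖b‖ / (1 - (1 + ‖a‖ * ‖b‖) * ‖p' - p‖) :=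
  stmt19_general a p q b p' hp hp' hb0 hb1 hb2 hb3 hpp' hap'
end
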